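/- arXiv:1406.5833 — 9 statements merged into one kernel-verified Lean document; each statement's English description precedes it below -/
import Mathlib

section
/- Let $(X,\mathcal B,\lambda)$ be a probability space, $T$ a non-singular transformation with Perron–Frobenius operator $P$ (defined by $\int_A Pf\,d\lambda=\int_{T^{-1}A}f\,d\lambda$ for all $f\in L^1(\lambda)$ and measurable $A$). Suppose $\lambda$ is exact, meaning $\int|P^n f|\,d\lambda\to 0$ for every $f\in L^1(\lambda)$ with $\int f\,d\lambda=0$. If $\mu\ll\lambda$ is an infinite $\sigma$-finite $T$-invariant measure, then for every measurable set $A$ with $\mu(A)<\infty$ and every $f\in L^1(\lambda)$ one has $\int_A P^n f\,d\lambda\to 0$ as $n\to\infty$. -/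
open MeasureTheory Filter ENNReal Topology

/-!
Iterating the defining identity of `P` gives `∫_A Pⁿ f dλ = ∫_{T⁻ⁿA} f dλ`, so by absolute
continuity of the integral it suffices that `λ(T⁻ⁿA) → 0`. Let `g` be a truncation of `dμ/dλ`,
with `c = ∫ g dλ` as large as we like. Exactness applied to `g - c` gives
`∫_{T⁻ⁿA} g dλ - c λ(T⁻ⁿA) → 0`, while `∫_{T⁻ⁿA} g dλ ≤ μ(T⁻ⁿA) = μ(A)`; hence
`limsup λ(T⁻ⁿA) ≤ μ(A) / c`, which is arbitrarily small because `μ` is infinite.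
-/

section TransferOperator

variable {X : Type*} [MeasurableSpace X] {T : X → X} {lam : Measure X}
  {P : (X → ℝ) → (X → ℝ)}

theorem integrable_iterate (hPint : ∀ f : X → ℝ, Integrable f lam → Integrable (P f) lam)
    (n : ℕ) {f : X → ℝ} (hf : Integrable f lam) : Integrable (P^[n] f) lam := by
  induction n with
  | zero => exact hf
  | succ n ih => exact Function.iterate_succ_apply' P n f ▸ hPint _ ih

theorem setIntegral_iterate_eq_setIntegral_preimage (hT : Measurable T)
    (hPint : ∀ f : X → ℝ, Integrable f lam → Integrable (P f) lam)
    (hP : ∀ f : X → ℝ, Integrable f lam → ∀ A : Set X, MeasurableSet A →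
      ∫ x in A, P f x ∂lam = ∫ x in T ⁻¹' A, f x ∂lam)
    (n : ℕ) {f : X → ℝ} (hf : Integrable f lam) {A : Set X} (hA : MeasurableSet A) :
    ∫ x in A, P^[n] f x ∂lam = ∫ x in T^[n] ⁻¹' A, f x ∂lam := by
  induction n generalizing A with
  | zero => rfl
  | succ n ih =>
    rw [Function.iterate_succ_apply', hP _ (integrable_iterate hPint n hf) A hA,
      ih (hT hA), Function.iterate_succ', Set.preimage_comp]

theorem tendsto_setIntegral_preimage_iterate_of_exact (hT : Measurable T)
    (hPint : ∀ f : X → ℝ, Integrable f lam → Integrable (P f) lam)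
    (hP : ∀ f : X → ℝ, Integrable f lam → ∀ A : Set X, MeasurableSet A →
      ∫ x in A, P f x ∂lam = ∫ x in T ⁻¹' A, f x ∂lam)
    (hexact : ∀ f : X → ℝ, Integrable f lam → ∫ x, f x ∂lam = 0 →
      Tendsto (fun n => ∫ x, |P^[n] f x| ∂lam) atTop (𝓝 0))
    {A : Set X} (hA : MeasurableSet A) {f : X → ℝ} (hf : Integrable f lam)
    (hf0 : ∫ x, f x ∂lam = 0) :
    Tendsto (fun n => ∫ x in T^[n] ⁻¹' A, f x ∂lam) atTop (𝓝 0) := by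
  refine squeeze_zero_norm (fun n => ?_) (hexact f hf hf0)
  rw [← setIntegral_iterate_eq_setIntegral_preimage hT hPint hP n hf hA]
  calc ‖∫ x in A, P^[n] f x ∂lam‖ ≤ ∫ x in A, |P^[n] f x| ∂lam :=
        norm_integral_le_integral_norm _
    _ ≤ ∫ x, |P^[n] f x| ∂lam :=
        setIntegral_le_integral (integrable_iterate hPint n hf).abs
          (ae_of_all _ fun x => abs_nonneg _)

end TransferOperator

section AbsolutelyContinuous

variable {X : Type*} [MeasurableSpace X] {lam mu : Measure X}

theorem tendsto_lintegral_min_rnDeriv [mu.HaveLebesgueDecomposition lam] (hac : mu ≪ lam) :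
    Tendsto (fun K : ℕ => ∫⁻ x, min (mu.rnDeriv lam x) K ∂lam) atTop (𝓝 (mu Set.univ)) := by
  rw [← Measure.lintegral_rnDeriv hac]
  refine lintegral_tendsto_of_tendsto_of_monotone
    (fun K => ((mu.measurable_rnDeriv lam).min measurable_const).aemeasurable)
    (ae_of_all _ fun x i j hij => min_le_min_left _ (Nat.cast_le.2 hij))
    (ae_of_all _ fun x => ?_)
  simpa using tendsto_const_nhds.min ENNReal.tendsto_nat_nhds_top

theorem exists_integral_gt_of_measure_univ_eq_top [IsFiniteMeasure lam]
    [mu.HaveLebesgueDecomposition lam] (hac : mu ≪ lam) (hinf : mu Set.univ = ∞) (C : ℝ) :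
    ∃ g : X → ℝ, Integrable g lam ∧ C < ∫ x, g x ∂lam ∧
      ∀ s, MeasurableSet s → ENNReal.ofReal (∫ x in s, g x ∂lam) ≤ mu s := by
  set h := mu.rnDeriv lam
  have hK : ∀ᶠ K : ℕ in atTop, ENNReal.ofReal C < ∫⁻ x, min (h x) K ∂lam :=
    (tendsto_lintegral_min_rnDeriv hac).eventually_const_lt (hinf ▸ ofReal_lt_top)
  obtain ⟨K, hK⟩ := hK.exists
  have hmeas : Measurable fun x => min (h x) K := (mu.measurable_rnDeriv lam).min measurable_const
  have hlt : ∀ x, min (h x) K < ∞ := fun x => (min_le_right _ _).trans_lt (natCast_lt_top K)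
  have hint : ∀ s : Set X, ∫ x in s, (min (h x) K).toReal ∂lam
      = (∫⁻ x in s, min (h x) K ∂lam).toReal :=
    fun s => integral_toReal hmeas.aemeasurable (ae_of_all _ hlt)
  have hfin : ∀ s : Set X, ∫⁻ x in s, min (h x) K ∂lam ≠ ∞ := fun s =>
    ((lintegral_mono fun x => min_le_right _ _).trans_lt
      (lintegral_const_lt_top (natCast_ne_top K))).ne
  refine ⟨fun x => (min (h x) K).toReal, ?_, ?_, fun s hs => ?_⟩
  · refine Integrable.of_bound hmeas.ennreal_toReal.aestronglyMeasurable K (ae_of_all _ fun x => ?_)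
    rw [Real.norm_eq_abs, abs_of_nonneg toReal_nonneg]
    exact toReal_le_of_le_ofReal K.cast_nonneg (by simp)
  · rw [← setIntegral_univ, hint, Measure.restrict_univ]
    calc C ≤ (ENNReal.ofReal C).toReal := le_max_left C 0
      _ < _ := toReal_strict_mono (by simpa using hfin Set.univ) hK
  · rw [hint, ofReal_toReal (hfin s), ← Measure.setLIntegral_rnDeriv' hac hs]
    exact lintegral_mono fun x => min_le_left _ _

theorem tendsto_measure_zero_of_tendsto_setIntegral [IsProbabilityMeasure lam]
    [mu.HaveLebesgueDecomposition lam] (hac : mu ≪ lam) (hinf : mu Set.univ = ∞)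
    {S : ℕ → Set X} (hS : ∀ n, MeasurableSet (S n)) {M : ℝ≥0∞} (hM : M ≠ ∞)
    (hSM : ∀ n, mu (S n) ≤ M)
    (hmix : ∀ g : X → ℝ, Integrable g lam → ∫ x, g x ∂lam = 0 →
      Tendsto (fun n => ∫ x in S n, g x ∂lam) atTop (𝓝 0)) :
    Tendsto (fun n => lam (S n)) atTop (𝓝 0) := by
  rw [← tendsto_toReal_iff (fun n => measure_ne_top lam _) zero_ne_top, toReal_zero]
  refine tendsto_order.2 ⟨fun a ha => .of_forall fun n => ha.trans_le toReal_nonneg,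
    fun ε hε => ?_⟩
  obtain ⟨g, hg, hgc, hgmu⟩ :=
    exists_integral_gt_of_measure_univ_eq_top hac hinf ((M.toReal + 1) / ε)
  set c := ∫ x, g x ∂lam
  have hc : 0 < c := lt_of_le_of_lt (by positivity) hgc
  have hmean : ∫ x, (g x - c) ∂lam = 0 := by
    rw [integral_sub hg (integrable_const c)]
    simp [c]
  filter_upwards [(hmix (fun x => g x - c) (hg.sub (integrable_const c)) hmean).eventually
    (lt_mem_nhds neg_one_lt_zero)] with n hn
  rw [integral_sub hg.integrableOn (integrable_const c).integrableOn, setIntegral_const,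
    smul_eq_mul] at hn
  have hgS : ∫ x in S n, g x ∂lam ≤ M.toReal :=
    (ofReal_le_iff_le_toReal hM).1 ((hgmu _ (hS n)).trans (hSM n))
  have hεc : M.toReal + 1 < ε * c := by rwa [div_lt_iff₀' hε] at hgc
  exact lt_of_mul_lt_mul_right (by simp only [measureReal_def] at hn; linarith) hc.le

end AbsolutelyContinuous

theorem stmt2_general {X : Type*} [MeasurableSpace X]
    (T : X → X) (hT : Measurable T)
    (lam : Measure X) [IsProbabilityMeasure lam]
    (P : (X → ℝ) → (X → ℝ))
    (hPint : ∀ f : X → ℝ, Integrable f lam → Integrable (P f) lam)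
    (hP : ∀ f : X → ℝ, Integrable f lam → ∀ A : Set X, MeasurableSet A →
      ∫ x in A, P f x ∂lam = ∫ x in T ⁻¹' A, f x ∂lam)
    (hexact : ∀ f : X → ℝ, Integrable f lam → ∫ x, f x ∂lam = 0 →
      Tendsto (fun n => ∫ x, |P^[n] f x| ∂lam) atTop (nhds 0))
    (mu : Measure X) [SigmaFinite mu]
    (hinf : mu Set.univ = ∞)
    (hac : mu ≪ lam)
    (hinv : ∀ A : Set X, MeasurableSet A → mu (T ⁻¹' A) = mu A) :
    ∀ A : Set X, MeasurableSet A → mu A < ∞ →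
      ∀ f : X → ℝ, Integrable f lam →
        Tendsto (fun n => ∫ x in A, P^[n] f x ∂lam) atTop (nhds 0) := by
  intro A hA hAfin f hf
  have hpres : MeasurePreserving T mu mu :=
    ⟨hT, Measure.ext fun s hs => by rw [Measure.map_apply hT hs, hinv s hs]⟩
  have hlam : Tendsto (fun n => lam (T^[n] ⁻¹' A)) atTop (𝓝 0) :=
    tendsto_measure_zero_of_tendsto_setIntegral hac hinf (fun n => hT.iterate n hA) hAfin.ne
      (fun n => ((hpres.iterate n).measure_preimage hA.nullMeasurableSet).le)
      (fun g hg hg0 => tendsto_setIntegral_preimage_iterate_of_exact hT hPint hP hexact hA hg hg0)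
  refine (hf.tendsto_setIntegral_nhds_zero hlam).congr fun n => ?_
  exact (setIntegral_iterate_eq_setIntegral_preimage hT hPint hP n hf hA).symm

theorem stmt2 {X : Type*} [MeasurableSpace X]
    (T : X → X) (hT : Measurable T)
    (lam : Measure X) [IsProbabilityMeasure lam]
    (hns : ∀ A : Set X, MeasurableSet A → lam (T ⁻¹' A) = 0 → lam A = 0)
    (P : (X → ℝ) → (X → ℝ))
    (hPint : ∀ f : X → ℝ, Integrable f lam → Integrable (P f) lam)
    (hP : ∀ f : X → ℝ, Integrable f lam → ∀ A : Set X, MeasurableSet A →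
      ∫ x in A, P f x ∂lam = ∫ x in T ⁻¹' A, f x ∂lam)
    (hexact : ∀ f : X → ℝ, Integrable f lam → ∫ x, f x ∂lam = 0 →
      Tendsto (fun n => ∫ x, |P^[n] f x| ∂lam) atTop (nhds 0))
    (mu : Measure X) [SigmaFinite mu]
    (hinf : mu Set.univ = ∞)
    (hac : mu ≪ lam)
    (hinv : ∀ A : Set X, MeasurableSet A → mu (T ⁻¹' A) = mu A) :
    ∀ A : Set X, MeasurableSet A → mu A < ∞ →
      ∀ f : X → ℝ, Integrable f lam →
        Tendsto (fun n => ∫ x in A, P^[n] f x ∂lam) atTop (nhds 0) :=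
  stmt2_general T hT lam P hPint hP hexact mu hinf hac hinv
end

section
/- Let $T$ be a non-singular transformation of a probability space $(X,\mathcal B,\lambda)$ with $\lambda$ exact, and suppose there exists an infinite $\sigma$-finite $T$-invariant measure $\mu\ll\lambda$. Then $\lambda$ is not full, i.e. there exists a measurable set $B$ with $\lambda(B)>0$ such that $\lambda(T^n(B))$ does not converge to $1$. -/
/-!
Let `g = dμ/dλ`. Since `μ` is infinite, `∫ g dλ = ∞`, so there are bounded truncations `φ ≤ g`
with arbitrarily large mean `c = ∫ φ dλ`. For a set `G` with `μ G < ∞`, duality and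
`T`-invariance of `μ` give
`c · λ(T⁻ⁿ G) ≤ ∫_{T⁻ⁿ G} φ dλ + |∫_G Pⁿ(φ - c) dλ| ≤ μ G + ‖Pⁿ(φ - c)‖₁`,
and exactness makes the last term small, so `λ(T⁻ⁿ G) → 0`. By σ-finiteness such a `G` can
be chosen with `λ G > 0`; a subsequence with `∑ λ(T^{-n_j} G) < 1` then leaves a set `B` of
positive measure missing every `T^{-n_j} G`. Then `T^{n_j} B ⊆ Gᶜ`, so `λ(T^{n_j} B) ≤ λ Gᶜ < 1`.
-/

open MeasureTheory Filter ENNReal Set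

namespace MeasureTheory

variable {X : Type*} [MeasurableSpace X]

theorem exists_measurableSet_lt_top_pos (mu : Measure X) [SigmaFinite mu] (lam : Measure X)
    [NeZero lam] : ∃ G, MeasurableSet G ∧ mu G < ∞ ∧ 0 < lam G := by
  by_contra! h
  have hnull : lam univ = 0 := by
    rw [← iUnion_spanningSets mu]
    exact measure_iUnion_null fun i => nonpos_iff_eq_zero.1
      (h _ (measurableSet_spanningSets mu i) (measure_spanningSets_lt_top mu i))
  exact NeZero.ne lam (Measure.measure_univ_eq_zero.1 hnull)

theorem exists_pos_measure_frequently_disjoint {μ : Measure X} [IsFiniteMeasure μ] [NeZero μ]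
    {s : ℕ → Set X} (hs : ∀ n, MeasurableSet (s n))
    (h : Tendsto (fun n => μ (s n)) atTop (nhds 0)) :
    ∃ B, MeasurableSet B ∧ 0 < μ B ∧ ∃ᶠ n in atTop, Disjoint B (s n) := by
  obtain ⟨ε, hεpos, hεsum⟩ :=
    ENNReal.exists_pos_sum_of_countable (NeZero.ne (μ univ)) ℕ
  have hsel : ∀ j, ∃ n, j ≤ n ∧ μ (s n) < ε j := fun j =>
    ((eventually_ge_atTop j).and (h.eventually (gt_mem_nhds (coe_pos.2 (hεpos j))))).exists
  choose n hjn hn using hsel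
  have hU : MeasurableSet (⋃ j, s (n j)) := MeasurableSet.iUnion fun j => hs (n j)
  have hμU : μ (⋃ j, s (n j)) < μ univ :=
    calc μ (⋃ j, s (n j)) ≤ ∑' j, μ (s (n j)) := measure_iUnion_le _
      _ ≤ ∑' j, (ε j : ℝ≥0∞) := ENNReal.tsum_le_tsum fun j => (hn j).le
      _ < μ univ := hεsum
  refine ⟨(⋃ j, s (n j))ᶜ, hU.compl, ?_, frequently_atTop.2 fun j =>
    ⟨n j, hjn j, Disjoint.mono_right (subset_iUnion (fun j => s (n j)) j) disjoint_compl_left⟩⟩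
  rw [measure_compl hU (measure_ne_top _ _)]
  exact tsub_pos_of_lt hμU

theorem exists_integrable_density_le {mu lam : Measure X} [SigmaFinite mu] [IsFiniteMeasure lam]
    (hac : mu ≪ lam) (hinf : mu univ = ∞) (M : ℝ) :
    ∃ φ : X → ℝ, Integrable φ lam ∧ M < ∫ x, φ x ∂lam ∧
      ∀ A, MeasurableSet A → ENNReal.ofReal (∫ x in A, φ x ∂lam) ≤ mu A := by
  set g := mu.rnDeriv lam
  have hg : Measurable g := Measure.measurable_rnDeriv mu lam
  have hlim : Tendsto (fun k : ℕ => ∫⁻ x, min (g x) k ∂lam) atTop (nhds ∞) := by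
    rw [← hinf, ← Measure.lintegral_rnDeriv hac]
    refine lintegral_tendsto_of_tendsto_of_monotone
      (fun k => (hg.min measurable_const).aemeasurable)
      (ae_of_all _ fun x k l hkl => min_le_min_left _ (by exact_mod_cast hkl))
      (ae_of_all _ fun x => ?_)
    simpa using tendsto_const_nhds.min ENNReal.tendsto_nat_nhds_top
  obtain ⟨k, hk⟩ := (hlim.eventually_const_lt (ofReal_lt_top (r := max M 0))).exists
  have hfin : ∀ x, min (g x) k ≠ ∞ := fun x => ((min_le_right _ _).trans_lt (natCast_lt_top k)).ne
  have hLfin : ∫⁻ x, min (g x) k ∂lam ≠ ∞ :=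
    ne_top_of_le_ne_top (mul_ne_top (natCast_ne_top k) (measure_ne_top lam univ))
      ((lintegral_mono fun x => min_le_right (g x) k).trans_eq (lintegral_const _))
  have hmeas : AEMeasurable (fun x => min (g x) k) lam := (hg.min measurable_const).aemeasurable
  have hint : Integrable (fun x => (min (g x) k).toReal) lam :=
    integrable_toReal_of_lintegral_ne_top hmeas hLfin
  refine ⟨_, hint, ?_, fun A hA => ?_⟩
  · rw [integral_toReal hmeas (ae_of_all _ fun x => (hfin x).lt_top)]
    exact (le_max_left M 0).trans_lt ((ofReal_lt_iff_lt_toReal (le_max_right M 0) hLfin).1 hk)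
  · calc ENNReal.ofReal (∫ x in A, (min (g x) k).toReal ∂lam)
        = ∫⁻ x in A, min (g x) k ∂lam := by
          rw [ofReal_integral_eq_lintegral_ofReal hint.integrableOn
            (ae_of_all _ fun x => toReal_nonneg)]
          exact lintegral_congr fun x => ofReal_toReal (hfin x)
      _ ≤ ∫⁻ x in A, g x ∂lam := lintegral_mono fun x => min_le_left _ _
      _ = mu A := Measure.setLIntegral_rnDeriv hac A

section TransferOperator

variable {T : X → X} {lam : Measure X} {P : (X → ℝ) → (X → ℝ)}

theorem integrable_iterate_of_integrable (hPint : ∀ f, Integrable f lam → Integrable (P f) lam)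
    (n : ℕ) {f : X → ℝ} (hf : Integrable f lam) : Integrable (P^[n] f) lam := by
  induction n generalizing f with
  | zero => exact hf
  | succ n ih => exact ih (hPint f hf)

theorem setIntegral_iterate_eq_setIntegral_preimage (hT : Measurable T)
    (hPint : ∀ f, Integrable f lam → Integrable (P f) lam)
    (hP : ∀ f, Integrable f lam → ∀ A, MeasurableSet A →
      ∫ x in A, P f x ∂lam = ∫ x in T ⁻¹' A, f x ∂lam)
    (n : ℕ) {f : X → ℝ} (hf : Integrable f lam) {A : Set X} (hA : MeasurableSet A) :
    ∫ x in A, P^[n] f x ∂lam = ∫ x in T^[n] ⁻¹' A, f x ∂lam := by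
  induction n generalizing f with
  | zero => rfl
  | succ n ih =>
    rw [Function.iterate_succ_apply, ih (hPint f hf), hP f hf _ (hT.iterate n hA),
      Function.iterate_succ, preimage_comp]

theorem mul_measureReal_preimage_iterate_le [IsFiniteMeasure lam] {mu : Measure X}
    (hT : Measurable T) (hPint : ∀ f, Integrable f lam → Integrable (P f) lam)
    (hP : ∀ f, Integrable f lam → ∀ A, MeasurableSet A →
      ∫ x in A, P f x ∂lam = ∫ x in T ⁻¹' A, f x ∂lam)
    (hμ : MeasurePreserving T mu mu) {φ : X → ℝ} (hφ : Integrable φ lam)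
    (hφμ : ∀ A, MeasurableSet A → ENNReal.ofReal (∫ x in A, φ x ∂lam) ≤ mu A)
    {G : Set X} (hG : MeasurableSet G) (hμG : mu G ≠ ∞) (n : ℕ) :
    (∫ x, φ x ∂lam) * lam.real (T^[n] ⁻¹' G) ≤
      mu.real G + ∫ x, |P^[n] (fun y => φ y - ∫ z, φ z ∂lam) x| ∂lam := by
  set c := ∫ z, φ z ∂lam
  set S := T^[n] ⁻¹' G
  have hS : MeasurableSet S := hT.iterate n hG
  have hμS : mu S = mu G := (hμ.iterate n).measure_preimage hG.nullMeasurableSet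
  have hf : Integrable (fun y => φ y - c) lam := hφ.sub (integrable_const c)
  have hφS : ∫ x in S, φ x ∂lam ≤ mu.real G := by
    rw [Measure.real, ← hμS]
    exact (ofReal_le_iff_le_toReal (hμS ▸ hμG)).1 (hφμ S hS)
  have hsplit : ∫ x in S, (φ x - c) ∂lam = ∫ x in S, φ x ∂lam - lam.real S * c := by
    rw [integral_sub hφ.integrableOn (integrableOn_const (measure_ne_top _ _)),
      setIntegral_const, smul_eq_mul]
  have hdual : |∫ x in S, (φ x - c) ∂lam| ≤ ∫ x, |P^[n] (fun y => φ y - c) x| ∂lam := by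
    rw [← setIntegral_iterate_eq_setIntegral_preimage hT hPint hP n hf hG]
    exact abs_integral_le_integral_abs.trans (setIntegral_le_integral
      (integrable_iterate_of_integrable hPint n hf).abs (ae_of_all _ fun x => abs_nonneg _))
  linarith [neg_abs_le (∫ x in S, (φ x - c) ∂lam)]

theorem tendsto_measure_preimage_iterate_of_exact [IsProbabilityMeasure lam] {mu : Measure X}
    [SigmaFinite mu] (hT : Measurable T) (hPint : ∀ f, Integrable f lam → Integrable (P f) lam)
    (hP : ∀ f, Integrable f lam → ∀ A, MeasurableSet A →
      ∫ x in A, P f x ∂lam = ∫ x in T ⁻¹' A, f x ∂lam)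
    (hexact : ∀ f, Integrable f lam → ∫ x, f x ∂lam = 0 →
      Tendsto (fun n => ∫ x, |P^[n] f x| ∂lam) atTop (nhds 0))
    (hμ : MeasurePreserving T mu mu) (hinf : mu univ = ∞) (hac : mu ≪ lam)
    {G : Set X} (hG : MeasurableSet G) (hμG : mu G ≠ ∞) :
    Tendsto (fun n => lam (T^[n] ⁻¹' G)) atTop (nhds 0) := by
  rw [← ENNReal.tendsto_toReal_iff (fun n => measure_ne_top _ _) zero_ne_top, toReal_zero]
  refine tendsto_order.2 ⟨fun a ha => Eventually.of_forall fun n => ha.trans_le toReal_nonneg,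
    fun ε hε => ?_⟩
  obtain ⟨φ, hφ, hc, hφμ⟩ := exists_integrable_density_le hac hinf ((mu.real G + 1) / ε)
  have hcpos : 0 < ∫ x, φ x ∂lam := lt_of_le_of_lt (by positivity) hc
  have hmean : ∫ x, (φ x - ∫ z, φ z ∂lam) ∂lam = 0 := by
    simp [integral_sub hφ (integrable_const _)]
  filter_upwards [(hexact (fun y => φ y - ∫ z, φ z ∂lam) (hφ.sub (integrable_const _))
    hmean).eventually_lt_const one_pos]
    with n hn
  have hbound := mul_measureReal_preimage_iterate_le hT hPint hP hμ hφ hφμ hG hμG n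
  have hcε := (div_lt_iff₀ hε).1 hc
  exact lt_of_mul_lt_mul_left (by rw [Measure.real] at hbound; linarith) hcpos.le

end TransferOperator

end MeasureTheory

theorem stmt3_general {X : Type*} [MeasurableSpace X]
    (T : X → X) (hT : Measurable T)
    (lam : Measure X) [IsProbabilityMeasure lam]
    (P : (X → ℝ) → (X → ℝ))
    (hPint : ∀ f : X → ℝ, Integrable f lam → Integrable (P f) lam)
    (hP : ∀ f : X → ℝ, Integrable f lam → ∀ A : Set X, MeasurableSet A →
      ∫ x in A, P f x ∂lam = ∫ x in T ⁻¹' A, f x ∂lam)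
    (hexact : ∀ f : X → ℝ, Integrable f lam → ∫ x, f x ∂lam = 0 →
      Tendsto (fun n => ∫ x, |P^[n] f x| ∂lam) atTop (nhds 0))
    (mu : Measure X) [SigmaFinite mu]
    (hinf : mu Set.univ = ∞)
    (hac : mu ≪ lam)
    (hinv : ∀ A : Set X, MeasurableSet A → mu (T ⁻¹' A) = mu A) :
    ∃ B : Set X, MeasurableSet B ∧ 0 < lam B ∧
      ¬ Tendsto (fun n => lam (T^[n] '' B)) atTop (nhds 1) := by
  have hμ : MeasurePreserving T mu mu :=
    ⟨hT, Measure.ext fun A hA => by rw [Measure.map_apply hT hA, hinv A hA]⟩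
  obtain ⟨G, hG, hμG, hlamG⟩ := exists_measurableSet_lt_top_pos mu lam
  obtain ⟨B, hB, hlamB, hdisj⟩ := exists_pos_measure_frequently_disjoint (fun n => hT.iterate n hG)
    (tendsto_measure_preimage_iterate_of_exact hT hPint hP hexact hμ hinf hac hG hμG.ne)
  refine ⟨B, hB, hlamB, fun hfull => ?_⟩
  have hlamGc : lam Gᶜ < 1 := by
    rw [prob_compl_eq_one_sub hG]
    exact ENNReal.sub_lt_self one_ne_top one_ne_zero hlamG.ne'
  obtain ⟨n, hlt, hBn⟩ := ((hfull.eventually_const_lt hlamGc).and_frequently hdisj).exists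
  exact hlt.not_ge (measure_mono (image_subset_iff.2 (disjoint_left.1 hBn)))

theorem stmt3 {X : Type*} [MeasurableSpace X]
    (T : X → X) (hT : Measurable T)
    (lam : Measure X) [IsProbabilityMeasure lam]
    (hns : ∀ A : Set X, MeasurableSet A → lam (T ⁻¹' A) = 0 → lam A = 0)
    (P : (X → ℝ) → (X → ℝ))
    (hPint : ∀ f : X → ℝ, Integrable f lam → Integrable (P f) lam)
    (hP : ∀ f : X → ℝ, Integrable f lam → ∀ A : Set X, MeasurableSet A →
      ∫ x in A, P f x ∂lam = ∫ x in T ⁻¹' A, f x ∂lam)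
    (hexact : ∀ f : X → ℝ, Integrable f lam → ∫ x, f x ∂lam = 0 →
      Tendsto (fun n => ∫ x, |P^[n] f x| ∂lam) atTop (nhds 0))
    (mu : Measure X) [SigmaFinite mu]
    (hinf : mu Set.univ = ∞)
    (hac : mu ≪ lam)
    (hinv : ∀ A : Set X, MeasurableSet A → mu (T ⁻¹' A) = mu A) :
    ∃ B : Set X, MeasurableSet B ∧ 0 < lam B ∧
      ¬ Tendsto (fun n => lam (T^[n] '' B)) atTop (nhds 1) :=
  stmt3_general T hT lam P hPint hP hexact mu hinf hac hinv
end

section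
/- Let $T\colon X\to X$ be a transformation of a compact metric space, and let $\lambda$ be a fully supported non-singular probability measure which is limsup full (i.e. $\lambda(A)>0$ implies $\limsup_n\lambda(T^n(A))=1$). If there exists a $T$-invariant probability measure $\mu$ equivalent to $\lambda$ (mutually absolutely continuous), then $\lambda$ is full, i.e. $\lambda(A)>0$ implies $\lim_n\lambda(T^n(A))=1$. -/
open MeasureTheory Filter ENNReal

/-- Uniform absolute continuity for a finite measure: ε-δ version. -/
lemma unif_ac {X : Type*} [MeasurableSpace X] (nu rho : Measure X)
    [IsFiniteMeasure nu] [SigmaFinite rho]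
    (h : nu ≪ rho) {ε : ℝ≥0∞} (hε : ε ≠ 0) :
    ∃ δ > 0, ∀ s : Set X, rho s < δ → nu s < ε := by
  obtain ⟨δ, hδ0, hδ⟩ := exists_pos_setLIntegral_lt_of_measure_lt
    (μ := rho) (Measure.lintegral_rnDeriv_lt_top nu rho).ne hε
  exact ⟨δ, hδ0, fun s hs => by
    rw [← Measure.setLIntegral_rnDeriv h s]; exact hδ s hs⟩

/-- If `nu ≪ rho` and `nu` is finite, then `rho sₙ → 0` implies `nu sₙ → 0`. -/
lemma tendsto_measure_zero_of_ac {X : Type*} [MeasurableSpace X]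
    (nu rho : Measure X) [IsFiniteMeasure nu] [SigmaFinite rho]
    (h : nu ≪ rho) {s : ℕ → Set X}
    (hs : Tendsto (fun n => rho (s n)) atTop (nhds 0)) :
    Tendsto (fun n => nu (s n)) atTop (nhds 0) := by
  have h1 : ∫⁻ x, nu.rnDeriv rho x ∂rho ≠ ∞ :=
    (Measure.lintegral_rnDeriv_lt_top nu rho).ne
  have h2 := tendsto_setLIntegral_zero h1 (l := atTop) (s := s) hs
  have h3 : ∀ n, ∫⁻ x in s n, nu.rnDeriv rho x ∂rho = nu (s n) :=
    fun n => Measure.setLIntegral_rnDeriv h (s n)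
  simpa only [h3] using h2

theorem stmt4 {X : Type*} [MetricSpace X] [CompactSpace X]
    [MeasurableSpace X] [BorelSpace X]
    (T : X → X) (hT : Measurable T)
    (lam : Measure X) [IsProbabilityMeasure lam]
    (hsupp : ∀ U : Set X, IsOpen U → U.Nonempty → 0 < lam U)
    (hns : ∀ A : Set X, MeasurableSet A → lam (T ⁻¹' A) = 0 → lam A = 0)
    (hlimsupfull : ∀ A : Set X, MeasurableSet A → 0 < lam A →
      limsup (fun n => lam (T^[n] '' A)) atTop = 1)
    (mu : Measure X) [IsProbabilityMeasure mu]
    (hac : mu ≪ lam) (hac' : lam ≪ mu)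
    (hinv : ∀ A : Set X, MeasurableSet A → mu (T ⁻¹' A) = mu A) :
    ∀ A : Set X, MeasurableSet A → 0 < lam A →
      Tendsto (fun n => lam (T^[n] '' A)) atTop (nhds 1) := by
  intro A hA hApos
  set S : ℕ → Set X := fun n => T^[n] '' A with hS
  -- common measurable hulls for lam and mu
  set D : ℕ → Set X := fun n =>
    toMeasurable lam (S n) ∩ toMeasurable mu (S n) with hD
  have hDmeas : ∀ n, MeasurableSet (D n) := fun n =>
    (measurableSet_toMeasurable _ _).inter (measurableSet_toMeasurable _ _)
  have hsub : ∀ n, S n ⊆ D n := fun n =>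
    Set.subset_inter (subset_toMeasurable _ _) (subset_toMeasurable _ _)
  have hlamD : ∀ n, lam (D n) = lam (S n) := fun n =>
    le_antisymm
      (le_trans (measure_mono Set.inter_subset_left) (measure_toMeasurable _).le)
      (measure_mono (hsub n))
  have hmuD : ∀ n, mu (D n) = mu (S n) := fun n =>
    le_antisymm
      (le_trans (measure_mono Set.inter_subset_right) (measure_toMeasurable _).le)
      (measure_mono (hsub n))
  -- monotonicity of n ↦ mu (S n)
  have himg : ∀ s : Set X, mu s ≤ mu (T '' s) := by
    intro s
    have h1 : s ⊆ T ⁻¹' (toMeasurable mu (T '' s)) :=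
      fun x hx => subset_toMeasurable _ _ (Set.mem_image_of_mem T hx)
    calc mu s ≤ mu (T ⁻¹' (toMeasurable mu (T '' s))) := measure_mono h1
      _ = mu (toMeasurable mu (T '' s)) := hinv _ (measurableSet_toMeasurable _ _)
      _ = mu (T '' s) := measure_toMeasurable _
  have hSsucc : ∀ n, S (n + 1) = T '' S n := by
    intro n
    simp only [hS, Function.iterate_succ', Function.comp_apply]
    exact (Set.image_image T (T^[n]) A).symm
  have hmono : Monotone (fun n => mu (S n)) := by
    apply monotone_nat_of_le_succ
    intro n
    rw [hSsucc n]
    exact himg (S n)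
  -- mu (S n) converges to its supremum c
  have htend_g : Tendsto (fun n => mu (S n)) atTop (nhds (⨆ n, mu (S n))) :=
    tendsto_atTop_iSup hmono
  set c : ℝ≥0∞ := ⨆ n, mu (S n) with hc
  have hc_le : c ≤ 1 := iSup_le fun n => prob_le_one
  -- the supremum c equals 1
  have hc_eq : c = 1 := by
    by_contra hne
    have hclt : c < 1 := lt_of_le_of_ne hc_le hne
    have hεpos : (1 : ℝ≥0∞) - c ≠ 0 := by
      simp only [ne_eq, tsub_eq_zero_iff_le, not_le]
      exact hclt
    obtain ⟨δ, hδ0, hδ⟩ := unif_ac mu lam hac hεpos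
    -- for every n, lam (D n)ᶜ ≥ δ, hence lam (S n) ≤ 1 - δ
    have hbound : ∀ n, lam (S n) ≤ 1 - δ := by
      intro n
      have hmuc : 1 - c ≤ mu (D n)ᶜ := by
        have h1 : mu (D n)ᶜ = 1 - mu (D n) := by
          rw [measure_compl (hDmeas n) (measure_ne_top _ _), measure_univ]
        rw [h1]
        exact tsub_le_tsub_left ((hmuD n).le.trans (le_iSup (fun n => mu (S n)) n)) 1
      have hlamc : δ ≤ lam (D n)ᶜ := by
        by_contra hlt
        push_neg at hlt
        exact absurd hmuc (not_le_of_gt (hδ _ hlt))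
      have h2 : lam (D n) = 1 - lam (D n)ᶜ := by
        have h3 := measure_add_measure_compl (μ := lam) (hDmeas n)
        rw [measure_univ] at h3
        exact ENNReal.eq_sub_of_add_eq (measure_ne_top _ _) h3
      rw [← hlamD n, h2]
      exact tsub_le_tsub_left hlamc 1
    have hlimsup : limsup (fun n => lam (S n)) atTop ≤ 1 - δ :=
      limsup_le_of_le (by isBoundedDefault) (Eventually.of_forall hbound)
    rw [hlimsupfull A hA hApos] at hlimsup
    exact absurd hlimsup (not_le_of_gt (ENNReal.sub_lt_self one_ne_top one_ne_zero hδ0.ne'))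
  -- hence mu (D n)ᶜ → 0
  have hmuc_tendsto : Tendsto (fun n => mu (D n)ᶜ) atTop (nhds 0) := by
    have h1 : ∀ n, mu (D n)ᶜ = 1 - mu (S n) := by
      intro n
      rw [measure_compl (hDmeas n) (measure_ne_top _ _), measure_univ, hmuD n]
    simp only [h1]
    have := ENNReal.Tendsto.sub (tendsto_const_nhds (x := (1 : ℝ≥0∞))) htend_g
      (Or.inl one_ne_top)
    rw [hc_eq] at this
    simpa using this
  -- hence lam (D n)ᶜ → 0
  have hlamc_tendsto : Tendsto (fun n => lam (D n)ᶜ) atTop (nhds 0) :=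
    tendsto_measure_zero_of_ac lam mu hac' hmuc_tendsto
  -- conclude
  have h2 : ∀ n, lam (S n) = 1 - lam (D n)ᶜ := by
    intro n
    have h3 := measure_add_measure_compl (μ := lam) (hDmeas n)
    rw [measure_univ] at h3
    rw [← hlamD n]
    exact ENNReal.eq_sub_of_add_eq (measure_ne_top _ _) h3
  have hfinal := ENNReal.Tendsto.sub (tendsto_const_nhds (x := (1 : ℝ≥0∞)))
    hlamc_tendsto (Or.inl one_ne_top)
  simp only [tsub_zero] at hfinal
  have : Tendsto (fun n => lam (S n)) atTop (nhds 1) := by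
    simpa only [← h2] using hfinal
  exact this
end

section
/- Let $(X,\rho)$ be a compact metric space with fully supported non-singular Borel probability measure $\lambda$ that is limsup full for a measurable map $T\colon X\to X$. Then for every $\delta<\operatorname{diam}(X)/2$, the set of $\delta$-Li-Yorke pairs $LY_2^\delta=\{(x,y): \liminf_n\rho(T^nx,T^ny)=0 \text{ and } \limsup_n\rho(T^nx,T^ny)>\delta\}$ has full $\lambda\times\lambda$ measure in $X\times X$. -/
/-!
A limsup-full measure cannot have a positive-measure set whose late images all miss a ball of a
fixed radius `r`: on a compact space with full support, such balls have measure at least some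
`c > 0`, so the images would have measure at most `1 - c`. Hence for a fixed `x`, almost every
`y` has its orbit frequently in any prescribed sequence of `r`-balls. Taking the balls centred
at `T^[n] x` gives proximality, and taking them around whichever of two points `u, v` with
`dist u v > 2δ` lies farther from `T^[n] x` gives `limsup > δ`. Fubini finishes the argument.
-/

open MeasureTheory Filter ENNReal Metric Set

theorem exists_pos_forall_le_measure_ball {X : Type*} [PseudoMetricSpace X] [CompactSpace X]
    [MeasurableSpace X] (μ : Measure X) [μ.IsOpenPosMeasure] {r : ℝ}
    (hr : 0 < r) : ∃ c : ℝ≥0∞, 0 < c ∧ ∀ x, c ≤ μ (ball x r) := by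
  obtain ⟨t, ht⟩ := isCompact_univ.elim_finite_subcover (fun x : X => ball x (r / 2))
    (fun _ => isOpen_ball) (fun x _ => mem_iUnion.2 ⟨x, mem_ball_self (half_pos hr)⟩)
  refine ⟨t.inf fun i => μ (ball i (r / 2)), (Finset.lt_inf_iff (by simp)).2 fun i _ =>
    measure_ball_pos μ i (half_pos hr), fun x => ?_⟩
  obtain ⟨i, hit, hxi⟩ := mem_iUnion₂.1 (ht (mem_univ x))
  calc t.inf (fun i => μ (ball i (r / 2))) ≤ μ (ball i (r / 2)) := Finset.inf_le hit
    _ ≤ μ (ball x r) := measure_mono (ball_subset_ball' (by linarith [mem_ball'.1 hxi]))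

theorem measurableSet_setOf_frequently {α : Type*} [MeasurableSpace α] {p : ℕ → α → Prop}
    (hp : ∀ n, MeasurableSet {x | p n x}) : MeasurableSet {x | ∃ᶠ n in atTop, p n x} := by
  convert MeasurableSet.measurableSet_limsup hp using 1
  ext x
  exact mem_limsup_iff_frequently_mem.symm

theorem liminf_eq_zero_of_frequently_lt {ι : Type*} {l : Filter ι} [l.NeBot] {u : ι → ℝ}
    (h0 : ∀ i, 0 ≤ u i) (hbdd : IsBoundedUnder (· ≤ ·) l u)
    (h : ∀ k : ℕ, ∃ᶠ i in l, u i < 1 / (k + 1)) : liminf u l = 0 := by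
  refine le_antisymm ?_ (le_liminf_of_le hbdd.isCoboundedUnder_ge (.of_forall h0))
  by_contra! hpos
  obtain ⟨k, hk⟩ := exists_nat_one_div_lt hpos
  have := liminf_le_of_frequently_le ((h k).mono fun _ => le_of_lt) (isBoundedUnder_of ⟨0, h0⟩)
  linarith

theorem exists_lt_dist_of_lt_diam {X : Type*} [PseudoMetricSpace X] [Nonempty X] {a : ℝ}
    (h : a < diam (univ : Set X)) : ∃ u v : X, a < dist u v := by
  by_contra! hle
  obtain ⟨x⟩ := ‹Nonempty X›
  have ha : 0 ≤ a := dist_self x ▸ hle x x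
  exact h.not_ge (diam_le_of_forall_dist_le ha fun u _ v _ => hle u v)

def IsLimsupFull {X : Type*} [MeasurableSpace X] (T : X → X) (μ : Measure X) : Prop :=
  ∀ A : Set X, MeasurableSet A → 0 < μ A → limsup (fun n => μ (T^[n] '' A)) atTop = 1

namespace IsLimsupFull

variable {X : Type*} [MeasurableSpace X] {T : X → X} {μ : Measure X}

theorem measure_eq_zero_of_eventually_le (h : IsLimsupFull T μ) {A : Set X}
    (hA : MeasurableSet A) {b : ℝ≥0∞} (hb : b < 1)
    (hle : ∀ᶠ n in atTop, μ (T^[n] '' A) ≤ b) : μ A = 0 := by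
  by_contra hA0
  have hlim : limsup (fun n => μ (T^[n] '' A)) atTop ≤ b :=
    limsup_le_of_le (by isBoundedDefault) hle
  rw [h A hA (pos_iff_ne_zero.2 hA0)] at hlim
  exact hb.not_ge hlim

variable [PseudoMetricSpace X] [CompactSpace X] [OpensMeasurableSpace X]
  [IsProbabilityMeasure μ] [μ.IsOpenPosMeasure]

theorem ae_frequently_mem_ball (h : IsLimsupFull T μ) (hT : Measurable T) (z : ℕ → X) {r : ℝ}
    (hr : 0 < r) : ∀ᵐ y ∂μ, ∃ᶠ n in atTop, T^[n] y ∈ ball (z n) r := by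
  obtain ⟨c, hc, hball⟩ := exists_pos_forall_le_measure_ball μ hr
  set A : ℕ → Set X := fun N => ⋂ n ≥ N, T^[n] ⁻¹' (ball (z n) r)ᶜ
  have hA_null : ∀ N, μ (A N) = 0 := fun N => by
    have hA : MeasurableSet (A N) := .iInter fun n => .iInter fun _ =>
      measurableSet_ball.compl.preimage (hT.iterate n)
    refine h.measure_eq_zero_of_eventually_le hA (ENNReal.sub_lt_self one_ne_top one_ne_zero
      hc.ne') (eventually_atTop.2 ⟨N, fun n hn => ?_⟩)
    have himage : T^[n] '' A N ⊆ (ball (z n) r)ᶜ := by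
      rintro _ ⟨y, hy, rfl⟩
      exact mem_iInter₂.1 hy n hn
    calc μ (T^[n] '' A N) ≤ μ (ball (z n) r)ᶜ := measure_mono himage
      _ = 1 - μ (ball (z n) r) := prob_compl_eq_one_sub measurableSet_ball
      _ ≤ 1 - c := tsub_le_tsub_left (hball _) 1
  rw [ae_iff]
  refine measure_mono_null (fun y hy => ?_) (measure_iUnion_null hA_null)
  simp only [mem_ofPred_eq, not_frequently, eventually_atTop] at hy
  obtain ⟨N, hN⟩ := hy
  exact mem_iUnion.2 ⟨N, mem_iInter₂.2 hN⟩

theorem ae_frequently_dist_iterate_lt (h : IsLimsupFull T μ) (hT : Measurable T) (x : X)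
    {r : ℝ} (hr : 0 < r) : ∀ᵐ y ∂μ, ∃ᶠ n in atTop, dist (T^[n] x) (T^[n] y) < r := by
  filter_upwards [h.ae_frequently_mem_ball hT (fun n => T^[n] x) hr] with y hy
  exact hy.mono fun n hn => mem_ball'.1 hn

theorem ae_frequently_lt_dist_iterate (h : IsLimsupFull T μ) (hT : Measurable T) (x : X)
    {a : ℝ} (ha : 2 * a < diam (univ : Set X)) :
    ∀ᵐ y ∂μ, ∃ᶠ n in atTop, a < dist (T^[n] x) (T^[n] y) := by
  have := nonempty_of_isProbabilityMeasure μ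
  obtain ⟨u, v, huv⟩ := exists_lt_dist_of_lt_diam ha
  have : ∀ w : X, ∃ z, dist u v / 2 ≤ dist w z := fun w => by
    by_contra! h
    linarith [dist_triangle_left u v w, h u, h v]
  choose far hfar using this
  have hr : 0 < dist u v / 2 - a := by linarith
  filter_upwards [h.ae_frequently_mem_ball hT (fun n => far (T^[n] x)) hr] with y hy
  refine hy.mono fun n hn => ?_
  linarith [hfar (T^[n] x), mem_ball.1 hn, dist_triangle (T^[n] x) (T^[n] y) (far (T^[n] x))]

end IsLimsupFull

theorem stmt5_general {X : Type*} [MetricSpace X] [CompactSpace X]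
    [MeasurableSpace X] [BorelSpace X]
    (T : X → X) (hT : Measurable T)
    (lam : Measure X) [IsProbabilityMeasure lam]
    (hsupp : ∀ U : Set X, IsOpen U → U.Nonempty → 0 < lam U)
    (hlimsupfull : ∀ A : Set X, MeasurableSet A → 0 < lam A →
      limsup (fun n => lam (T^[n] '' A)) atTop = 1)
    (δ : ℝ) (hδ : δ < Metric.diam (Set.univ : Set X) / 2) :
    (lam.prod lam) {p : X × X |
      liminf (fun n => dist (T^[n] p.1) (T^[n] p.2)) atTop = 0 ∧
      δ < limsup (fun n => dist (T^[n] p.1) (T^[n] p.2)) atTop} = 1 := by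
  have : lam.IsOpenPosMeasure := ⟨fun U hU hne => (hsupp U hU hne).ne'⟩
  have hfull : IsLimsupFull T lam := hlimsupfull
  set d : X × X → ℕ → ℝ := fun p n => dist (T^[n] p.1) (T^[n] p.2)
  have hd : ∀ n, Measurable fun p => d p n := fun n =>
    ((hT.iterate n).comp measurable_fst).dist ((hT.iterate n).comp measurable_snd)
  have hbdd : ∀ p, IsBoundedUnder (· ≤ ·) atTop (d p) := fun p =>
    isBoundedUnder_of ⟨diam (univ : Set X), fun n =>
      dist_le_diam_of_mem isCompact_univ.isBounded (mem_univ _) (mem_univ _)⟩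
  have hprox : ∀ᵐ p ∂lam.prod lam, ∀ k : ℕ, ∃ᶠ n in atTop, d p n < 1 / (k + 1) :=
    ae_all_iff.2 fun k => (Measure.ae_prod_iff_ae_ae (measurableSet_setOf_frequently fun n =>
      measurableSet_lt (hd n) measurable_const)).2 (ae_of_all _ fun x =>
        hfull.ae_frequently_dist_iterate_lt hT x Nat.one_div_pos_of_nat)
  obtain ⟨a, hδa, ha⟩ : ∃ a, δ < a ∧ 2 * a < diam (univ : Set X) :=
    ⟨(δ + diam (univ : Set X) / 2) / 2, by linarith, by linarith⟩
  have hfar : ∀ᵐ p ∂lam.prod lam, ∃ᶠ n in atTop, a < d p n :=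
    (Measure.ae_prod_iff_ae_ae (measurableSet_setOf_frequently fun n =>
      measurableSet_lt measurable_const (hd n))).2 (ae_of_all _ fun x =>
        hfull.ae_frequently_lt_dist_iterate hT x ha)
  refine (measure_congr (ae_eq_univ.2 (ae_iff.1 ?_))).trans measure_univ
  filter_upwards [hprox, hfar] with p hprox_p hfar_p
  exact ⟨liminf_eq_zero_of_frequently_lt (fun n => dist_nonneg) (hbdd p) hprox_p,
    hδa.trans_le (le_limsup_of_frequently_le (hfar_p.mono fun _ => le_of_lt) (hbdd p))⟩

theorem stmt5 {X : Type*} [MetricSpace X] [CompactSpace X]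
    [MeasurableSpace X] [BorelSpace X]
    (T : X → X) (hT : Measurable T)
    (lam : Measure X) [IsProbabilityMeasure lam]
    (hsupp : ∀ U : Set X, IsOpen U → U.Nonempty → 0 < lam U)
    (hns : ∀ A : Set X, MeasurableSet A → lam (T ⁻¹' A) = 0 → lam A = 0)
    (hlimsupfull : ∀ A : Set X, MeasurableSet A → 0 < lam A →
      limsup (fun n => lam (T^[n] '' A)) atTop = 1)
    (δ : ℝ) (hδ : δ < Metric.diam (Set.univ : Set X) / 2) :
    (lam.prod lam) {p : X × X |
      liminf (fun n => dist (T^[n] p.1) (T^[n] p.2)) atTop = 0 ∧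
      δ < limsup (fun n => dist (T^[n] p.1) (T^[n] p.2)) atTop} = 1 :=
  stmt5_general T hT lam hsupp hlimsupfull δ hδ
end

section
/- Let $(X,\rho)$ be a compact connected metric space with fully supported non-singular Borel probability measure $\lambda$ that is full for a measurable map $T\colon X\to X$. Then for every integer $d\ge 2$ and every $\delta<\operatorname{diam}(X)/(2(d-1))$, the set $LY_d^\delta$ of $\delta$-Li-Yorke $d$-tuples has full $\lambda_d$-measure in $X^d$, where $\lambda_d$ is the $d$-fold product measure. -/
open MeasureTheory Filter ENNReal

section Aux

variable {X : Type*} [MetricSpace X] [CompactSpace X]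
    [MeasurableSpace X] [BorelSpace X]
    {T : X → X} {lam : Measure X} [IsProbabilityMeasure lam]

private lemma nat_infinite_iff {S : Set ℕ} : S.Infinite ↔ ∀ N, ∃ n, N ≤ n ∧ n ∈ S := by
  constructor
  · intro h N
    obtain ⟨n, hn, hlt⟩ := h.exists_gt N
    exact ⟨n, hlt.le, hn⟩
  · intro h hfin
    obtain ⟨b, hb⟩ := hfin.bddAbove
    obtain ⟨n, hn, hnS⟩ := h (b + 1)
    exact absurd (hb hnS) (by omega)

private lemma measurableSet_infinite {α : Type*} [MeasurableSpace α] (V : α → Set ℕ)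
    (h : ∀ n, MeasurableSet {x | n ∈ V x}) : MeasurableSet {x | (V x).Infinite} := by
  have : {x | (V x).Infinite} = ⋂ N, ⋃ n, ⋃ (_ : N ≤ n), {x | n ∈ V x} := by
    ext x
    simp only [Set.mem_setOf_eq, Set.mem_iInter, Set.mem_iUnion, exists_prop]
    exact nat_infinite_iff
  rw [this]
  exact MeasurableSet.iInter fun N => MeasurableSet.iUnion fun n =>
    MeasurableSet.iUnion fun _ => h n

private lemma lemA (hT : Measurable T)
    (hfull : ∀ A : Set X, MeasurableSet A → 0 < lam A →
      Tendsto (fun n => lam (T^[n] '' A)) atTop (nhds 1))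
    {C : Set X} (hC : MeasurableSet C) (hCpos : 0 < lam C)
    {U : Set X} (hU : MeasurableSet U) (hUpos : 0 < lam U) :
    ∀ᶠ n in atTop, 0 < lam (C ∩ T^[n] ⁻¹' U) := by
  classical
  set B : Set ℕ := {n | lam (C ∩ T^[n] ⁻¹' U) = 0} with hB
  set D : Set X := C \ ⋃ n ∈ B, T^[n] ⁻¹' U with hD
  have hDm : MeasurableSet D :=
    hC.diff (MeasurableSet.biUnion (Set.to_countable _) fun n _ => (hT.iterate n) hU)
  have hsub : C ⊆ D ∪ ⋃ n ∈ B, C ∩ T^[n] ⁻¹' U := by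
    intro x hx
    by_cases hxU : x ∈ ⋃ n ∈ B, T^[n] ⁻¹' U
    · right
      simp only [Set.mem_iUnion] at hxU ⊢
      obtain ⟨n, hn, hxn⟩ := hxU
      exact ⟨n, hn, hx, hxn⟩
    · exact Or.inl ⟨hx, hxU⟩
  have hnull : lam (⋃ n ∈ B, C ∩ T^[n] ⁻¹' U) = 0 :=
    (measure_biUnion_null_iff (Set.to_countable _)).2 fun n hn => hn
  have hDpos : 0 < lam D := by
    have hle : lam C ≤ lam D := by
      calc lam C ≤ lam (D ∪ ⋃ n ∈ B, C ∩ T^[n] ⁻¹' U) := measure_mono hsub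
        _ ≤ lam D + lam (⋃ n ∈ B, C ∩ T^[n] ⁻¹' U) := measure_union_le _ _
        _ = lam D := by rw [hnull, add_zero]
    exact lt_of_lt_of_le hCpos hle
  have hlt : (1 : ℝ≥0∞) - lam U < 1 :=
    ENNReal.sub_lt_self one_ne_top one_ne_zero hUpos.ne'
  have hev : ∀ᶠ n in atTop, 1 - lam U < lam (T^[n] '' D) :=
    (hfull D hDm hDpos).eventually (lt_mem_nhds hlt)
  refine hev.mono fun n hn => ?_
  rcases eq_or_ne (lam (C ∩ T^[n] ⁻¹' U)) 0 with h0 | h0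
  · exfalso
    have hnB : n ∈ B := h0
    have himg : T^[n] '' D ⊆ Uᶜ := by
      rintro - ⟨x, hxD, rfl⟩
      intro hxU
      exact hxD.2 (Set.mem_biUnion hnB hxU)
    have hle : lam (T^[n] '' D) ≤ 1 - lam U := by
      calc lam (T^[n] '' D) ≤ lam Uᶜ := measure_mono himg
        _ = 1 - lam U := by rw [measure_compl hU (measure_ne_top lam U), measure_univ]
    exact absurd hn (not_lt.2 hle)
  · exact pos_iff_ne_zero.2 h0

private lemma lemC (hT : Measurable T)
    (hfull : ∀ A : Set X, MeasurableSet A → 0 < lam A →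
      Tendsto (fun n => lam (T^[n] '' A)) atTop (nhds 1))
    {S : Set ℕ} (hS : S.Infinite)
    {U : Set X} (hU : MeasurableSet U) (hUpos : 0 < lam U) :
    ∀ᵐ x ∂lam, {n | n ∈ S ∧ T^[n] x ∈ U}.Infinite := by
  have key : ∀ N : ℕ, lam {x | ∀ n, n ∈ S → N ≤ n → T^[n] x ∉ U} = 0 := by
    intro N
    set C : Set X := {x | ∀ n, n ∈ S → N ≤ n → T^[n] x ∉ U} with hCdef
    have hCm : MeasurableSet C := by
      have : C = ⋂ n, ⋂ (_ : n ∈ S ∧ N ≤ n), (T^[n] ⁻¹' U)ᶜ := by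
        ext x
        simp only [hCdef, Set.mem_setOf_eq, Set.mem_iInter, Set.mem_compl_iff,
          Set.mem_preimage]
        tauto
      rw [this]
      exact MeasurableSet.iInter fun n => MeasurableSet.iInter fun _ =>
        ((hT.iterate n) hU).compl
    by_contra h0
    have hCpos : 0 < lam C := pos_iff_ne_zero.2 h0
    obtain ⟨a, ha⟩ := eventually_atTop.1 (lemA hT hfull hCm hCpos hU hUpos)
    obtain ⟨n, hn, hnS⟩ := nat_infinite_iff.1 hS (max N a)
    have hpos := ha n (le_trans (le_max_right _ _) hn)
    have hempty : C ∩ T^[n] ⁻¹' U = ∅ := by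
      ext x
      simp only [Set.mem_inter_iff, Set.mem_preimage, Set.mem_empty_iff_false, iff_false,
        not_and]
      intro hxC hxU
      exact hxC n hnS (le_trans (le_max_left _ _) hn) hxU
    rw [hempty, measure_empty] at hpos
    exact lt_irrefl _ hpos
  rw [ae_iff]
  refine measure_mono_null ?_ (measure_iUnion_null key)
  intro x hx
  simp only [Set.mem_setOf_eq] at hx
  have h2 := mt nat_infinite_iff.2 hx
  push_neg at h2
  obtain ⟨N, hN⟩ := h2
  simp only [Set.mem_iUnion, Set.mem_setOf_eq]
  refine ⟨N, fun n hnS hNn hxU => ?_⟩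
  exact (hN n hNn) ⟨hnS, hxU⟩

private lemma stepLem (hT : Measurable T)
    (hfull : ∀ A : Set X, MeasurableSet A → 0 < lam A →
      Tendsto (fun n => lam (T^[n] '' A)) atTop (nhds 1))
    {m : ℕ} (k : Fin (m + 1))
    {W : Set X} (hWm : MeasurableSet W) (hWpos : 0 < lam W)
    (V : (Fin (m + 1) → X) → Set ℕ)
    (hVmeas : ∀ n, MeasurableSet {x : Fin (m + 1) → X | n ∈ V x})
    (hVindep : ∀ x a, V (Function.update x k a) = V x)
    (hae : ∀ᵐ x ∂(Measure.pi fun _ : Fin (m + 1) => lam), (V x).Infinite) :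
    ∀ᵐ x ∂(Measure.pi fun _ : Fin (m + 1) => lam),
      {n | n ∈ V x ∧ T^[n] (x k) ∈ W}.Infinite := by
  classical
  set μd := (Measure.pi fun _ : Fin (m + 1) => lam) with hμd
  set A : Set (Fin (m + 1) → X) := {x | (V x).Infinite} with hA
  set Bs : Set (Fin (m + 1) → X) := {x | {n | n ∈ V x ∧ T^[n] (x k) ∈ W}.Infinite} with hBs
  have hVmeas2 : ∀ n, MeasurableSet {x : Fin (m + 1) → X | n ∈ V x ∧ T^[n] (x k) ∈ W} := by
    intro n
    have : {x : Fin (m + 1) → X | n ∈ V x ∧ T^[n] (x k) ∈ W}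
        = {x | n ∈ V x} ∩ (fun x : Fin (m + 1) → X => T^[n] (x k)) ⁻¹' W := rfl
    rw [this]
    exact (hVmeas n).inter (((hT.iterate n).comp (measurable_pi_apply k)) hWm)
  have hAm : MeasurableSet A := measurableSet_infinite _ hVmeas
  have hBm : MeasurableSet Bs := measurableSet_infinite _ hVmeas2
  have hGm : MeasurableSet (A \ Bs) := hAm.diff hBm
  -- split coordinate k
  set e := MeasurableEquiv.piFinSuccAbove (fun _ : Fin (m + 1) => X) k with he
  have mp := measurePreserving_piFinSuccAbove (fun _ : Fin (m + 1) => lam) k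
  set s : Set (X × (Fin m → X)) := e.symm ⁻¹' (A \ Bs) with hs
  have hsm : MeasurableSet s := e.symm.measurable hGm
  have hpre : e ⁻¹' s = A \ Bs := by
    rw [hs, ← Set.preimage_comp]
    simp [Set.preimage_id']
  have hGzero : μd (A \ Bs) = 0 := by
    have h1 : μd (A \ Bs) = (lam.prod (Measure.pi fun _ : Fin m => lam)) s := by
      rw [← hpre]
      exact mp.measure_preimage hsm.nullMeasurableSet
    rw [h1, Measure.prod_apply_symm hsm]
    have hzero : ∀ y : Fin m → X, lam ((fun a => (a, y)) ⁻¹' s) = 0 := by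
      intro y
      set z : X → (Fin (m + 1) → X) := fun a => Fin.insertNth k a y with hz
      have hmemsec : ∀ a : X, (a, y) ∈ s ↔ z a ∈ A \ Bs := by
        intro a
        rw [hs, Set.mem_preimage]
        have : e.symm (a, y) = z a := by
          simp [he, hz, MeasurableEquiv.piFinSuccAbove_symm_apply, Fin.insertNthEquiv]
        rw [this]
      by_cases hne : ∃ a₀ : X, (a₀, y) ∈ s
      · obtain ⟨a₀, ha₀⟩ := hne
        have hSinf : (V (z a₀)).Infinite := ((hmemsec a₀).1 ha₀).1
        have hVconst : ∀ a : X, V (z a) = V (z a₀) := by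
          intro a
          have : z a = Function.update (z a₀) k a := by
            funext j
            rcases eq_or_ne j k with rfl | hjk
            · simp [hz, Fin.insertNth_apply_same]
            · obtain ⟨j', rfl⟩ := Fin.exists_succAbove_eq hjk
              rw [Function.update_of_ne (Fin.succAbove_ne k j')]
              simp [hz, Fin.insertNth_apply_succAbove]
          rw [this, hVindep]
        have hsubset : (fun a => (a, y)) ⁻¹' s ⊆
            {a : X | ¬ {n | n ∈ V (z a₀) ∧ T^[n] a ∈ W}.Infinite} := by
          intro a ha
          have hmem := (hmemsec a).1 ha
          have hka : z a k = a := by simp [hz]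
          intro hinf
          refine hmem.2 ?_
          show {n | n ∈ V (z a) ∧ T^[n] (z a k) ∈ W}.Infinite
          rw [hVconst a, hka]
          exact hinf
        refine measure_mono_null hsubset ?_
        have := lemC hT hfull hSinf hWm hWpos
        rw [ae_iff] at this
        simpa using this
      · have : (fun a => (a, y)) ⁻¹' s = ∅ := by
          ext a
          simp only [Set.mem_preimage, Set.mem_empty_iff_false, iff_false]
          exact fun ha => hne ⟨a, ha⟩
        rw [this, measure_empty]
    rw [lintegral_congr hzero, lintegral_zero]
  have hGae : ∀ᵐ x ∂μd, x ∉ A \ Bs := measure_eq_zero_iff_ae_notMem.1 hGzero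
  filter_upwards [hae, hGae] with x hx hxG
  by_contra hfin
  exact hxG ⟨hx, hfin⟩

private lemma mainLem (hT : Measurable T)
    (hfull : ∀ A : Set X, MeasurableSet A → 0 < lam A →
      Tendsto (fun n => lam (T^[n] '' A)) atTop (nhds 1))
    {m : ℕ} (U : Fin (m + 1) → Set X)
    (hUm : ∀ i, MeasurableSet (U i)) (hUpos : ∀ i, 0 < lam (U i)) :
    ∀ᵐ x ∂(Measure.pi fun _ : Fin (m + 1) => lam),
      {n : ℕ | ∀ i, T^[n] (x i) ∈ U i}.Infinite := by
  classical
  have key : ∀ k : ℕ, k ≤ m + 1 →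
      ∀ᵐ x ∂(Measure.pi fun _ : Fin (m + 1) => lam),
        {n : ℕ | ∀ i : Fin (m + 1), (i : ℕ) < k → T^[n] (x i) ∈ U i}.Infinite := by
    intro k
    induction k with
    | zero =>
      intro _
      refine ae_of_all _ fun x => ?_
      have heq : {n : ℕ | ∀ i : Fin (m + 1), (i : ℕ) < 0 → T^[n] (x i) ∈ U i} = Set.univ := by
        ext n; simp
      rw [heq]
      exact Set.infinite_univ
    | succ k ih =>
      intro hk1
      have hklt : k < m + 1 := by omega
      have ihh := ih (by omega)
      have hVmeas : ∀ n : ℕ, MeasurableSet {x : Fin (m + 1) → X |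
          ∀ i : Fin (m + 1), (i : ℕ) < k → T^[n] (x i) ∈ U i} := by
        intro n
        have heq : {x : Fin (m + 1) → X | ∀ i : Fin (m + 1), (i : ℕ) < k → T^[n] (x i) ∈ U i}
            = ⋂ i : Fin (m + 1), ⋂ (_ : (i : ℕ) < k),
                (fun x : Fin (m + 1) → X => T^[n] (x i)) ⁻¹' U i := by
          ext x
          simp only [Set.mem_setOf_eq, Set.mem_iInter, Set.mem_preimage]
        rw [heq]
        exact MeasurableSet.iInter fun i => MeasurableSet.iInter fun _ =>
          ((hT.iterate n).comp (measurable_pi_apply i)) (hUm i)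
      have hVindep : ∀ (x : Fin (m + 1) → X) (a : X),
          {n : ℕ | ∀ i : Fin (m + 1), (i : ℕ) < k →
              T^[n] (Function.update x (⟨k, hklt⟩ : Fin (m + 1)) a i) ∈ U i}
          = {n : ℕ | ∀ i : Fin (m + 1), (i : ℕ) < k → T^[n] (x i) ∈ U i} := by
        intro x a
        ext n
        simp only [Set.mem_setOf_eq]
        refine forall_congr' fun i => imp_congr_right fun hi => ?_
        have hik : i ≠ (⟨k, hklt⟩ : Fin (m + 1)) := by
          intro h
          rw [h] at hi
          exact lt_irrefl k hi
        rw [Function.update_of_ne hik]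
      have step := stepLem hT hfull (⟨k, hklt⟩ : Fin (m + 1)) (hUm ⟨k, hklt⟩) (hUpos ⟨k, hklt⟩)
        (fun x => {n : ℕ | ∀ i : Fin (m + 1), (i : ℕ) < k → T^[n] (x i) ∈ U i})
        hVmeas hVindep ihh
      filter_upwards [step] with x hx
      have heq : {n : ℕ | ∀ i : Fin (m + 1), (i : ℕ) < k + 1 → T^[n] (x i) ∈ U i}
          = {n | n ∈ {n : ℕ | ∀ i : Fin (m + 1), (i : ℕ) < k → T^[n] (x i) ∈ U i}
              ∧ T^[n] (x ⟨k, hklt⟩) ∈ U ⟨k, hklt⟩} := by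
        ext n
        simp only [Set.mem_setOf_eq]
        constructor
        · intro h
          exact ⟨fun i hi => h i (by omega), h ⟨k, hklt⟩ (Nat.lt_succ_self k)⟩
        · rintro ⟨h1, h2⟩ i hi
          rcases Nat.lt_or_ge (i : ℕ) k with hlt | hge
          · exact h1 i hlt
          · have hik : i = (⟨k, hklt⟩ : Fin (m + 1)) := Fin.ext (show (i : ℕ) = k by omega)
            rw [hik]; exact h2
      rw [heq]
      exact hx
  have hm1 := key (m + 1) le_rfl
  filter_upwards [hm1] with x hx
  have heq : {n : ℕ | ∀ i : Fin (m + 1), T^[n] (x i) ∈ U i}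
      = {n : ℕ | ∀ i : Fin (m + 1), (i : ℕ) < m + 1 → T^[n] (x i) ∈ U i} := by
    ext n
    simp only [Set.mem_setOf_eq]
    exact ⟨fun h i _ => h i, fun h i => h i i.isLt⟩
  rw [heq]
  exact hx

end Aux

theorem stmt6 {X : Type*} [MetricSpace X] [CompactSpace X] [ConnectedSpace X]
    [MeasurableSpace X] [BorelSpace X]
    (T : X → X) (hT : Measurable T)
    (lam : Measure X) [IsProbabilityMeasure lam]
    (hsupp : ∀ U : Set X, IsOpen U → U.Nonempty → 0 < lam U)
    (hns : ∀ A : Set X, MeasurableSet A → lam (T ⁻¹' A) = 0 → lam A = 0)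
    (hfull : ∀ A : Set X, MeasurableSet A → 0 < lam A →
      Tendsto (fun n => lam (T^[n] '' A)) atTop (nhds 1))
    (d : ℕ) (hd : 2 ≤ d)
    (δ : ℝ) (hδ : δ < Metric.diam (Set.univ : Set X) / (2 * (d - 1 : ℝ))) :
    (Measure.pi fun _ : Fin d => lam) {x : Fin d → X |
      liminf (fun n => ⨆ i : Fin d, ⨆ j : Fin d,
        dist (T^[n] (x i)) (T^[n] (x j))) atTop = 0 ∧
      δ < limsup (fun n => ⨅ p : {p : Fin d × Fin d // p.1 ≠ p.2},
        dist (T^[n] (x p.1.1)) (T^[n] (x p.1.2))) atTop} = 1 := by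
  classical
  obtain ⟨m, rfl⟩ : ∃ m, d = m + 1 := ⟨d - 1, by omega⟩
  set μd := (Measure.pi fun _ : Fin (m + 1) => lam) with hμd
  set Tgt := {x : Fin (m + 1) → X |
      liminf (fun n => ⨆ i : Fin (m + 1), ⨆ j : Fin (m + 1),
        dist (T^[n] (x i)) (T^[n] (x j))) atTop = 0 ∧
      δ < limsup (fun n => ⨅ p : {p : Fin (m + 1) × Fin (m + 1) // p.1 ≠ p.2},
        dist (T^[n] (x p.1.1)) (T^[n] (x p.1.2))) atTop} with hTgt
  have hXne : Nonempty X := inferInstance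
  haveI hpairs : Nonempty {p : Fin (m + 1) × Fin (m + 1) // p.1 ≠ p.2} := by
    refine ⟨⟨(⟨0, by omega⟩, ⟨1, by omega⟩), ?_⟩⟩
    simp [Fin.ext_iff]
  set DD := Metric.diam (Set.univ : Set X) with hDD
  have hDD0 : 0 ≤ DD := Metric.diam_nonneg
  have hm1 : (1 : ℝ) ≤ (m : ℝ) := by
    have : 1 ≤ m := by omega
    exact_mod_cast this
  have hm0 : (0 : ℝ) < (m : ℝ) := by linarith
  have hdencast : ((m + 1 : ℕ) : ℝ) - 1 = (m : ℝ) := by push_cast; ring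
  rw [hdencast] at hδ
  have hδe : δ < DD / (m : ℝ) := by
    refine lt_of_lt_of_le hδ ?_
    rw [div_le_div_iff₀ (by linarith) (by linarith)]
    nlinarith
  set r := (DD / (m : ℝ) - δ) / 3 with hrdef
  have hr : 0 < r := by rw [hrdef]; linarith
  have hbound : ∀ u v : X, dist u v ≤ DD := fun u v =>
    Metric.dist_le_diam_of_mem isCompact_univ.isBounded trivial trivial
  -- diameter attained
  obtain ⟨pq, -, hpq⟩ := (isCompact_univ.prod isCompact_univ).exists_isMaxOn
    (Set.univ_nonempty.prod Set.univ_nonempty)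
    ((continuous_dist.continuousOn) : ContinuousOn (fun p : X × X => dist p.1 p.2) _)
  set a := pq.1 with ha
  set b := pq.2 with hb
  have hab : dist a b = DD := by
    refine le_antisymm (hbound a b) ?_
    refine Metric.diam_le_of_forall_dist_le dist_nonneg fun u hu v hv => ?_
    exact hpq (Set.mk_mem_prod trivial trivial : (u, v) ∈ Set.univ ×ˢ Set.univ)
  -- spread points via IVT
  have hIVT : ∀ i : Fin (m + 1), ∃ w : X, dist a w = (i : ℝ) * (DD / (m : ℝ)) := by
    intro i
    have hf : Continuous fun w : X => dist a w := continuous_const.dist continuous_id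
    have hmem : (i : ℝ) * (DD / (m : ℝ)) ∈ Set.Icc (dist a a) (dist a b) := by
      rw [dist_self, hab]
      constructor
      · have : (0 : ℝ) ≤ (i : ℝ) := by positivity
        exact mul_nonneg this (div_nonneg hDD0 hm0.le)
      · have hi : (i : ℝ) ≤ (m : ℝ) := by exact_mod_cast Fin.is_le i
        calc (i : ℝ) * (DD / (m : ℝ)) ≤ (m : ℝ) * (DD / (m : ℝ)) :=
              mul_le_mul_of_nonneg_right hi (div_nonneg hDD0 hm0.le)
          _ = DD := by field_simp
    exact intermediate_value_univ a b hf hmem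
  choose z hz using hIVT
  have hzz : ∀ i j : Fin (m + 1), i ≠ j → DD / (m : ℝ) ≤ dist (z i) (z j) := by
    intro i j hij
    have h1 : |dist (z i) a - dist (z j) a| ≤ dist (z i) (z j) := abs_dist_sub_le _ _ _
    rw [dist_comm (z i) a, dist_comm (z j) a, hz i, hz j] at h1
    have h2 : |(i : ℝ) * (DD / (m : ℝ)) - (j : ℝ) * (DD / (m : ℝ))|
        = |(i : ℝ) - (j : ℝ)| * (DD / (m : ℝ)) := by
      rw [← sub_mul, abs_mul, abs_of_nonneg (div_nonneg hDD0 hm0.le)]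
    have h3 : (1 : ℝ) ≤ |(i : ℝ) - (j : ℝ)| := by
      have hne : ((i : ℕ) : ℤ) ≠ ((j : ℕ) : ℤ) := by
        exact_mod_cast fun h => hij (Fin.ext h)
      have h4 : (1 : ℤ) ≤ |((i : ℕ) : ℤ) - ((j : ℕ) : ℤ)| :=
        Int.one_le_abs (sub_ne_zero.2 hne)
      have h5 : ((i : ℝ) : ℝ) - (j : ℝ) = ((((i : ℕ) : ℤ) - ((j : ℕ) : ℤ) : ℤ) : ℝ) := by
        push_cast; ring
      rw [h5, ← Int.cast_abs]
      exact_mod_cast h4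
    calc DD / (m : ℝ) = 1 * (DD / (m : ℝ)) := (one_mul _).symm
      _ ≤ |(i : ℝ) - (j : ℝ)| * (DD / (m : ℝ)) :=
          mul_le_mul_of_nonneg_right h3 (div_nonneg hDD0 hm0.le)
      _ = |(i : ℝ) * (DD / (m : ℝ)) - (j : ℝ) * (DD / (m : ℝ))| := h2.symm
      _ ≤ dist (z i) (z j) := h1
  -- a.e. events
  have hsep : ∀ᵐ x ∂μd, {n : ℕ | ∀ i, T^[n] (x i) ∈ Metric.ball (z i) r}.Infinite :=
    mainLem hT hfull _ (fun i => measurableSet_ball)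
      (fun i => hsupp _ Metric.isOpen_ball ⟨z i, Metric.mem_ball_self hr⟩)
  have hprox : ∀ k : ℕ, ∀ᵐ x ∂μd,
      {n : ℕ | ∀ i : Fin (m + 1), T^[n] (x i) ∈ Metric.ball a (1 / ((k : ℝ) + 1))}.Infinite := by
    intro k
    exact mainLem hT hfull _ (fun i => measurableSet_ball)
      (fun i => hsupp _ Metric.isOpen_ball ⟨a, Metric.mem_ball_self (by positivity)⟩)
  have hgood : ∀ᵐ x ∂μd,
      (∀ k : ℕ, {n : ℕ | ∀ i : Fin (m + 1),
          T^[n] (x i) ∈ Metric.ball a (1 / ((k : ℝ) + 1))}.Infinite)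
        ∧ {n : ℕ | ∀ i, T^[n] (x i) ∈ Metric.ball (z i) r}.Infinite :=
    (ae_all_iff.2 hprox).and hsep
  -- pointwise implication
  have himp : ∀ x : Fin (m + 1) → X,
      ((∀ k : ℕ, {n : ℕ | ∀ i : Fin (m + 1),
          T^[n] (x i) ∈ Metric.ball a (1 / ((k : ℝ) + 1))}.Infinite)
        ∧ {n : ℕ | ∀ i, T^[n] (x i) ∈ Metric.ball (z i) r}.Infinite) → x ∈ Tgt := by
    rintro x ⟨hx1, hx2⟩
    rw [hTgt, Set.mem_setOf_eq]
    constructor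
    · -- liminf = 0
      set f : ℕ → ℝ := fun n => ⨆ i : Fin (m + 1), ⨆ j : Fin (m + 1),
        dist (T^[n] (x i)) (T^[n] (x j)) with hfdef
      have hf0 : ∀ n, 0 ≤ f n := fun n =>
        Real.iSup_nonneg fun i => Real.iSup_nonneg fun j => dist_nonneg
      have hfD : ∀ n, f n ≤ DD := fun n => ciSup_le fun i => ciSup_le fun j => hbound _ _
      have hfreq : ∀ k : ℕ, ∃ᶠ n in atTop, f n ≤ 2 * (1 / ((k : ℝ) + 1)) := by
        intro k
        rw [frequently_atTop]
        intro N
        obtain ⟨n, hn, hnmem⟩ := nat_infinite_iff.1 (hx1 k) N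
        refine ⟨n, hn, ?_⟩
        refine ciSup_le fun i => ciSup_le fun j => ?_
        have hi := hnmem i
        have hj := hnmem j
        rw [Metric.mem_ball] at hi hj
        calc dist (T^[n] (x i)) (T^[n] (x j))
            ≤ dist (T^[n] (x i)) a + dist (T^[n] (x j)) a := dist_triangle_right _ _ _
          _ ≤ 2 * (1 / ((k : ℝ) + 1)) := by linarith
      have hLle : ∀ k : ℕ, liminf f atTop ≤ 2 * (1 / ((k : ℝ) + 1)) := fun k =>
        liminf_le_of_frequently_le (hfreq k) (isBoundedUnder_of ⟨0, hf0⟩)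
      have hLge : 0 ≤ liminf f atTop :=
        le_liminf_of_le ((isBoundedUnder_of ⟨DD, hfD⟩).isCoboundedUnder_ge)
          (Eventually.of_forall hf0)
      refine le_antisymm ?_ hLge
      by_contra hpos
      push_neg at hpos
      obtain ⟨k, hk⟩ := exists_nat_one_div_lt (show (0 : ℝ) < liminf f atTop / 2 by linarith)
      have h2k := hLle k
      linarith
    · -- limsup > δ
      set g : ℕ → ℝ := fun n => ⨅ p : {p : Fin (m + 1) × Fin (m + 1) // p.1 ≠ p.2},
        dist (T^[n] (x p.1.1)) (T^[n] (x p.1.2)) with hgdef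
      have hgD : ∀ n, g n ≤ DD := by
        intro n
        obtain ⟨p0⟩ := hpairs
        have hbb : BddBelow (Set.range fun p : {p : Fin (m + 1) × Fin (m + 1) // p.1 ≠ p.2} =>
            dist (T^[n] (x p.1.1)) (T^[n] (x p.1.2))) := by
          refine ⟨0, ?_⟩
          rintro - ⟨p, rfl⟩
          exact dist_nonneg
        exact le_trans (ciInf_le hbb p0) (hbound _ _)
      have hfreq : ∃ᶠ n in atTop, δ + r ≤ g n := by
        rw [frequently_atTop]
        intro N
        obtain ⟨n, hn, hnmem⟩ := nat_infinite_iff.1 hx2 N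
        refine ⟨n, hn, le_ciInf fun p => ?_⟩
        obtain ⟨⟨i, j⟩, hij⟩ := p
        have hi := hnmem i
        have hj := hnmem j
        rw [Metric.mem_ball] at hi hj
        have h4 : dist (z i) (z j) ≤ dist (z i) (T^[n] (x i))
            + dist (T^[n] (x i)) (T^[n] (x j)) + dist (T^[n] (x j)) (z j) :=
          dist_triangle4 _ _ _ _
        have h5 : DD / (m : ℝ) ≤ dist (z i) (z j) := hzz i j hij
        have h6 : dist (z i) (T^[n] (x i)) < r := by rw [dist_comm]; exact hi
        have h7 : dist (T^[n] (x j)) (z j) < r := hj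
        have hδr : δ + r = DD / (m : ℝ) - 2 * r := by rw [hrdef]; ring
        show δ + r ≤ dist (T^[n] (x i)) (T^[n] (x j))
        rw [hδr]
        linarith
      have hlim := le_limsup_of_frequently_le hfreq (isBoundedUnder_of ⟨DD, hgD⟩)
      calc δ < δ + r := by linarith
        _ ≤ limsup g atTop := hlim
  -- conclude
  have hnull : μd {x : Fin (m + 1) → X | ¬ ((∀ k : ℕ, {n : ℕ | ∀ i : Fin (m + 1),
      T^[n] (x i) ∈ Metric.ball a (1 / ((k : ℝ) + 1))}.Infinite)
        ∧ {n : ℕ | ∀ i, T^[n] (x i) ∈ Metric.ball (z i) r}.Infinite)} = 0 := ae_iff.1 hgood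
  have hcnull : μd Tgtᶜ = 0 := by
    refine measure_mono_null (fun x hx => ?_) hnull
    exact fun hgx => hx (himp x hgx)
  refine le_antisymm prob_le_one ?_
  calc (1 : ℝ≥0∞) = μd (Tgt ∪ Tgtᶜ) := by rw [Set.union_compl_self, measure_univ]
    _ ≤ μd Tgt + μd Tgtᶜ := measure_union_le _ _
    _ = μd Tgt := by rw [hcnull, add_zero]
end

section
/- Let $(X,\rho)$ be a compact metric space, $T\colon X\to X$ continuous, $d\ge 2$, and suppose the $d$-fold product map $T_d=T\times\cdots\times T$ on $X^d$ admits a conservative non-atomic product measure $\lambda_d=\lambda^{\otimes d}$ with $\lambda$ fully supported and non-atomic. Then the set of asymptotic $d$-tuples, i.e. tuples $(x_1,\dots,x_d)$ with $\lim_n\max_{i,j}\rho(T^nx_i,T^nx_j)=0$, has $\lambda_d$-measure zero. -/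
open MeasureTheory Filter ENNReal Set

/-! Suppose the asymptotic tuples had positive measure. Off the diagonal `Δ`, which is null since
`λ` has no atoms, every asymptotic tuple lies outside some closed neighbourhood `D` of `Δ` and
eventually stays in `D` under `T_d`. A compact set `K` of positive measure of such tuples, all
staying in `D` after time `N`, would by conservativity return to itself at some time `n ≥ N`,
landing in `D` and outside `D` at once. -/

/-- Conservativity phrased with forward images; unlike `MeasureTheory.Conservative`, `f` need not
be quasi-measure-preserving. -/
def ImageConservative {α : Type*} [MeasurableSpace α] (μ : Measure α) (f : α → α) : Prop :=
  ∀ s, MeasurableSet s → 0 < μ s → ∃ n, 0 < n ∧ 0 < μ (s ∩ f^[n] '' s)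

theorem MeasureTheory.Measure.prod_setOf_fst_eq_null {α β : Type*} [MeasurableSpace α]
    [MeasurableSpace β] [MeasurableEq α] (μ : Measure α) [SFinite μ] [NullSingletonClass μ]
    (ν : Measure β) [SFinite ν] {f : β → α} (hf : Measurable f) :
    μ.prod ν {p | p.1 = f p.2} = 0 := by
  rw [Measure.prod_apply_symm (s := {p | p.1 = f p.2})
    (measurableSet_eq_fun measurable_fst (hf.comp measurable_snd))]
  simp [Set.preimage, measure_singleton]

theorem MeasureTheory.Measure.pi_setOf_apply_eq_null {α : Type*} [MeasurableSpace α]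
    [MeasurableEq α] (μ : Measure α) [SigmaFinite μ] [NullSingletonClass μ] {n : ℕ} {i j : Fin n}
    (hij : i ≠ j) :
    Measure.pi (fun _ : Fin n => μ) {x | x i = x j} = 0 := by
  cases n with
  | zero => exact i.elim0
  | succ n =>
    obtain ⟨j, rfl⟩ := Fin.exists_succAbove_eq hij.symm
    have hs : MeasurableSet {p : α × (Fin n → α) | p.1 = p.2 j} :=
      measurableSet_eq_fun measurable_fst ((measurable_pi_apply j).comp measurable_snd)
    have hnull := Measure.prod_setOf_fst_eq_null μ (Measure.pi fun _ : Fin n => μ)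
      (measurable_pi_apply j)
    rw [← (measurePreserving_piFinSuccAbove (fun _ => μ) i).measure_preimage
      hs.nullMeasurableSet] at hnull
    exact hnull

theorem dist_le_iSup_iSup_dist {ι X : Type*} [Finite ι] [PseudoMetricSpace X] (x : ι → X)
    (i j : ι) : dist (x i) (x j) ≤ ⨆ i, ⨆ j, dist (x i) (x j) :=
  le_ciSup_of_le (Finite.bddAbove_range _) i
    (le_ciSup (f := fun j => dist (x i) (x j)) (Finite.bddAbove_range _) j)

namespace ImageConservative

variable {α : Type*} [TopologicalSpace α] [T2Space α] [MeasurableSpace α] [BorelSpace α]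
  {μ : Measure α} {f : α → α}

/-- Compactness keeps the sets `K' ∩ f^[p] '' K'` measurable, so conservativity can be
applied again. -/
theorem exists_isCompact_subset_image_iterate (h : ImageConservative μ f) (hf : Continuous f)
    {K : Set α} (hK : IsCompact K) (hμK : 0 < μ K) (m : ℕ) :
    ∃ K' ⊆ K, IsCompact K' ∧ 0 < μ K' ∧ ∃ n ≥ m, K' ⊆ f^[n] '' K := by
  induction m with
  | zero => exact ⟨K, subset_rfl, hK, hμK, 0, le_rfl, by simp⟩
  | succ m ih =>
    obtain ⟨K', hK'K, hK', hμK', n, hmn, hK'n⟩ := ih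
    obtain ⟨p, hp, hμp⟩ := h K' hK'.isClosed.measurableSet hμK'
    refine ⟨K' ∩ f^[p] '' K', inter_subset_left.trans hK'K,
      hK'.inter_right (hK'.image (hf.iterate p)).isClosed, hμp, n + p, by omega, ?_⟩
    rintro _ ⟨-, y, hy, rfl⟩
    obtain ⟨z, hz, rfl⟩ := hK'n hy
    exact ⟨z, hz, by rw [← Function.iterate_add_apply, Nat.add_comm]⟩

theorem exists_iterate_mem (h : ImageConservative μ f) (hf : Continuous f) {K : Set α}
    (hK : IsCompact K) (hμK : 0 < μ K) (m : ℕ) : ∃ n ≥ m, ∃ x ∈ K, f^[n] x ∈ K := by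
  obtain ⟨K', hK'K, -, hμK', n, hmn, hK'n⟩ := h.exists_isCompact_subset_image_iterate hf hK hμK m
  obtain ⟨y, hy⟩ := nonempty_of_measure_ne_zero hμK'.ne'
  obtain ⟨x, hx, rfl⟩ := hK'n hy
  exact ⟨n, hmn, x, hx, hK'K hy⟩

theorem measure_setOf_notMem_eventually_mem_null [IsFiniteMeasure μ]
    [μ.InnerRegularCompactLTTop] (h : ImageConservative μ f) (hf : Continuous f) {D : Set α}
    (hD : MeasurableSet D) : μ {x | x ∉ D ∧ ∀ᶠ n in atTop, f^[n] x ∈ D} = 0 := by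
  have hE : ∀ N, μ {x | x ∉ D ∧ ∀ n ≥ N, f^[n] x ∈ D} = 0 := by
    intro N
    by_contra hpos
    have hmeas : MeasurableSet {x | x ∉ D ∧ ∀ n ≥ N, f^[n] x ∈ D} := by
      simp only [ofPred_and, ofPred_forall]
      exact hD.compl.inter (MeasurableSet.iInter fun n => MeasurableSet.iInter fun _ =>
        (hf.measurable.iterate n) hD)
    obtain ⟨K, hKE, hK, hμK⟩ :=
      hmeas.exists_lt_isCompact_of_ne_top (measure_ne_top _ _) (pos_iff_ne_zero.2 hpos)
    obtain ⟨n, hn, x, hx, hfx⟩ := h.exists_iterate_mem hf hK hμK N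
    exact (hKE hfx).1 ((hKE hx).2 n hn)
  refine measure_mono_null (fun x hx => ?_) (measure_iUnion_null hE)
  obtain ⟨N, hN⟩ := eventually_atTop.1 hx.2
  exact mem_iUnion.2 ⟨N, hx.1, hN⟩

end ImageConservative

theorem stmt8_general {X : Type*} [MetricSpace X] [CompactSpace X]
    [MeasurableSpace X] [BorelSpace X]
    (T : X → X) (hT : Continuous T)
    (lam : Measure X) [IsProbabilityMeasure lam] [NullSingletonClass lam]
    (d : ℕ) (hd : 2 ≤ d)
    (hcons : ∀ A : Set (Fin d → X), MeasurableSet A →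
      0 < (Measure.pi fun _ : Fin d => lam) A →
      ∃ n : ℕ, 0 < n ∧
        0 < (Measure.pi fun _ : Fin d => lam)
          (A ∩ (fun y : Fin d → X => fun i => T (y i))^[n] '' A)) :
    (Measure.pi fun _ : Fin d => lam) {x : Fin d → X |
      Tendsto (fun n => ⨆ i : Fin d, ⨆ j : Fin d,
        dist (T^[n] (x i)) (T^[n] (x j))) atTop (nhds 0)} = 0 := by
  set S : (Fin d → X) → (Fin d → X) := Pi.map fun _ => T
  have hS : ImageConservative (Measure.pi fun _ : Fin d => lam) S := hcons
  let D : ℕ → Set (Fin d → X) := fun k => {x | ⨆ i, ⨆ j, dist (x i) (x j) ≤ 1 / (k + 1)}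
  have hD : ∀ k, MeasurableSet (D k) := fun k =>
    measurableSet_le (Measurable.iSup fun i => Measurable.iSup fun j =>
      ((continuous_apply i).dist (continuous_apply j)).measurable) measurable_const
  let i₀ : Fin d := ⟨0, by omega⟩
  let i₁ : Fin d := ⟨1, by omega⟩
  have hsub : {x : Fin d → X | Tendsto (fun n => ⨆ i : Fin d, ⨆ j : Fin d,
      dist (T^[n] (x i)) (T^[n] (x j))) atTop (nhds 0)} ⊆
      {x | x i₀ = x i₁} ∪ ⋃ k, {x | x ∉ D k ∧ ∀ᶠ n in atTop, S^[n] x ∈ D k} := by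
    intro x hx
    by_cases hx₀₁ : x i₀ = x i₁
    · exact Or.inl hx₀₁
    obtain ⟨k, hk⟩ := exists_nat_one_div_lt (dist_pos.2 hx₀₁)
    refine Or.inr (mem_iUnion.2 ⟨k, fun hxD => ?_, ?_⟩)
    · exact (hk.trans_le (dist_le_iSup_iSup_dist x i₀ i₁)).not_ge hxD
    · simpa [S, D, Pi.map_iterate] using hx.eventually (Iic_mem_nhds (by positivity))
  exact measure_mono_null hsub (measure_union_null
    (Measure.pi_setOf_apply_eq_null lam (by simp [i₀, i₁, Fin.ext_iff]))
    (measure_iUnion_null fun k => hS.measure_setOf_notMem_eventually_mem_null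
      (continuous_pi fun i => hT.comp (continuous_apply i)) (hD k)))

theorem stmt8 {X : Type*} [MetricSpace X] [CompactSpace X]
    [MeasurableSpace X] [BorelSpace X]
    (T : X → X) (hT : Continuous T)
    (lam : Measure X) [IsProbabilityMeasure lam] [NullSingletonClass lam]
    (hsupp : ∀ U : Set X, IsOpen U → U.Nonempty → 0 < lam U)
    (d : ℕ) (hd : 2 ≤ d)
    (hcons : ∀ A : Set (Fin d → X), MeasurableSet A →
      0 < (Measure.pi fun _ : Fin d => lam) A →
      ∃ n : ℕ, 0 < n ∧
        0 < (Measure.pi fun _ : Fin d => lam)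
          (A ∩ (fun y : Fin d → X => fun i => T (y i))^[n] '' A)) :
    (Measure.pi fun _ : Fin d => lam) {x : Fin d → X |
      Tendsto (fun n => ⨆ i : Fin d, ⨆ j : Fin d,
        dist (T^[n] (x i)) (T^[n] (x j))) atTop (nhds 0)} = 0 :=
  stmt8_general T hT lam d hd hcons
end

section
/- Let $(X,\rho)$ be a compact metric space with at least two points and let $T\colon X\to X$ be topologically weakly mixing (i.e. $T\times T$ is topologically transitive on $X^2$). Then for every $d\ge 2$ there exists $\delta_d>0$ such that the set of $\delta_d$-Li-Yorke $d$-tuples is residual in $X^d$. -/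
open Filter Topology Set

section aux

variable {X : Type*} [MetricSpace X] [CompactSpace X] [Nontrivial X]
variable (T : X → X)

lemma iter_prod (n : ℕ) (p : X × X) :
    (fun p : X × X => (T p.1, T p.2))^[n] p = (T^[n] p.1, T^[n] p.2) := by
  induction n generalizing p with
  | zero => simp
  | succ n ih =>
    rw [Function.iterate_succ_apply, Function.iterate_succ_apply,
      Function.iterate_succ_apply, ih]

variable (hT : Continuous T)
variable (hwm : ∀ U V : Set (X × X), IsOpen U → IsOpen V → U.Nonempty → V.Nonempty →
      ∃ n : ℕ, (((fun p : X × X => (T p.1, T p.2))^[n] '' U) ∩ V).Nonempty)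

include hwm

/-- From weak mixing: some positive time from W to V. -/
lemma wm_step (W V : Set X) (hWo : IsOpen W) (hVo : IsOpen V)
    (hWn : W.Nonempty) (hVn : V.Nonempty) :
    ∃ n, 1 ≤ n ∧ ∃ x ∈ W, T^[n] x ∈ V := by
  obtain ⟨a, b, hab⟩ := exists_pair_ne X
  set D := dist a b with hD
  have hD0 : 0 < D := dist_pos.mpr hab
  obtain ⟨w, hw⟩ := hWn
  obtain ⟨r0, hr0, hball⟩ := Metric.isOpen_iff.mp hWo w hw
  set r := min r0 (D / 6) with hr
  have hrpos : 0 < r := lt_min hr0 (by linarith)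
  have hz : ∃ z : X, D / 2 ≤ dist w z := by
    rcases le_or_gt (D / 2) (dist w a) with h | h
    · exact ⟨a, h⟩
    · refine ⟨b, ?_⟩
      have := dist_triangle a w b
      have h1 : dist a w = dist w a := dist_comm a w
      linarith
  obtain ⟨z, hwz⟩ := hz
  have hmem1 : ((w, w) : X × X) ∈ (Metric.ball w r) ×ˢ (Metric.ball w r) := by
    constructor <;> simp [Metric.mem_ball, hrpos]
  have hmem2 : ((hVn.choose, z) : X × X) ∈ V ×ˢ (Metric.ball z (D / 6)) := by
    refine ⟨hVn.choose_spec, ?_⟩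
    simp only [Metric.mem_ball, dist_self]
    linarith
  obtain ⟨n, q, hq⟩ := hwm ((Metric.ball w r) ×ˢ (Metric.ball w r))
    (V ×ˢ (Metric.ball z (D / 6)))
    ((Metric.isOpen_ball).prod (Metric.isOpen_ball)) (hVo.prod Metric.isOpen_ball)
    ⟨(w, w), hmem1⟩ ⟨(hVn.choose, z), hmem2⟩
  obtain ⟨⟨p, hp, hpq⟩, hqV⟩ := hq
  rw [iter_prod] at hpq
  subst hpq
  have hp1 : p.1 ∈ Metric.ball w r := hp.1
  have hp2 : p.2 ∈ Metric.ball w r := hp.2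
  have h1 : T^[n] p.1 ∈ V := hqV.1
  have h2 : T^[n] p.2 ∈ Metric.ball z (D / 6) := hqV.2
  have hp1W : p.1 ∈ W := hball (Metric.ball_subset_ball (min_le_left r0 (D / 6)) hp1)
  refine ⟨n, ?_, p.1, hp1W, h1⟩
  by_contra hn
  push_neg at hn
  interval_cases n
  simp only [Function.iterate_zero, id_eq] at h2
  have d1 : dist p.2 w < r := Metric.mem_ball.mp hp2
  have d2 : dist p.2 z < D / 6 := Metric.mem_ball.mp h2
  have hr2 : r ≤ D / 6 := min_le_right _ _
  have := dist_triangle w p.2 z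
  have hcw : dist w p.2 = dist p.2 w := dist_comm w p.2
  linarith

include hT

/-- Arbitrarily large transition times. -/
lemma wm_large (m : ℕ) : ∀ W V : Set X, IsOpen W → IsOpen V → W.Nonempty → V.Nonempty →
    ∃ n, m ≤ n ∧ ∃ x ∈ W, T^[n] x ∈ V := by
  induction m with
  | zero =>
    intro W V hWo hVo hWn hVn
    obtain ⟨n, _, h⟩ := wm_step T hwm W V hWo hVo hWn hVn
    exact ⟨n, Nat.zero_le _, h⟩
  | succ m ih =>
    intro W V hWo hVo hWn hVn
    obtain ⟨k, hk1, v, hv, hvk⟩ := wm_step T hwm V V hVo hVo hVn hVn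
    have hV'o : IsOpen (V ∩ T^[k] ⁻¹' V) :=
      hVo.inter ((hT.iterate k).isOpen_preimage V hVo)
    have hV'n : (V ∩ T^[k] ⁻¹' V).Nonempty := ⟨v, hv, hvk⟩
    obtain ⟨n, hn, x, hxW, hxn⟩ := ih W (V ∩ T^[k] ⁻¹' V) hWo hV'o hWn hV'n
    refine ⟨n + k, by omega, x, hxW, ?_⟩
    have : T^[n + k] x = T^[k] (T^[n] x) := by
      rw [Nat.add_comm, Function.iterate_add_apply]
    rw [this]
    exact hxn.2

/-- Furstenberg intersection trick for a pair. -/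
lemma wm_pair (U1 V1 U2 V2 : Set X) (h1o : IsOpen U1) (h1o' : IsOpen V1)
    (h2o : IsOpen U2) (h2o' : IsOpen V2)
    (h1n : U1.Nonempty) (h1n' : V1.Nonempty) (h2n : U2.Nonempty) (h2n' : V2.Nonempty) :
    ∃ U V : Set X, IsOpen U ∧ IsOpen V ∧ U.Nonempty ∧ V.Nonempty ∧
      ∀ n, (∃ x ∈ U, T^[n] x ∈ V) →
        (∃ x ∈ U1, T^[n] x ∈ V1) ∧ (∃ x ∈ U2, T^[n] x ∈ V2) := by
  obtain ⟨n, q, ⟨p, hp, hpq⟩, hqV⟩ := hwm (U1 ×ˢ V1) (U2 ×ˢ V2)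
    (h1o.prod h1o') (h2o.prod h2o')
    ⟨(h1n.choose, h1n'.choose), h1n.choose_spec, h1n'.choose_spec⟩
    ⟨(h2n.choose, h2n'.choose), h2n.choose_spec, h2n'.choose_spec⟩
  rw [iter_prod] at hpq
  subst hpq
  refine ⟨U1 ∩ T^[n] ⁻¹' U2, V1 ∩ T^[n] ⁻¹' V2,
    h1o.inter ((hT.iterate n).isOpen_preimage _ h2o),
    h1o'.inter ((hT.iterate n).isOpen_preimage _ h2o'),
    ⟨p.1, hp.1, hqV.1⟩, ⟨p.2, hp.2, hqV.2⟩, ?_⟩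
  rintro m ⟨z, ⟨hz1, hz2⟩, ⟨hz3, hz4⟩⟩
  refine ⟨⟨z, hz1, hz3⟩, ⟨T^[n] z, hz2, ?_⟩⟩
  have : T^[n] (T^[m] z) = T^[m] (T^[n] z) := by
    rw [← Function.iterate_add_apply, Nat.add_comm, ← Function.iterate_add_apply]
  rw [← this]
  exact hz4

/-- Finite intersection. -/
lemma wm_finite (d : ℕ) (U V : Fin d → Set X) (hUo : ∀ i, IsOpen (U i))
    (hVo : ∀ i, IsOpen (V i)) (hUn : ∀ i, (U i).Nonempty) (hVn : ∀ i, (V i).Nonempty) :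
    ∃ U' V' : Set X, IsOpen U' ∧ IsOpen V' ∧ U'.Nonempty ∧ V'.Nonempty ∧
      ∀ n, (∃ x ∈ U', T^[n] x ∈ V') → ∀ i, ∃ x ∈ U i, T^[n] x ∈ V i := by
  induction d with
  | zero =>
    exact ⟨univ, univ, isOpen_univ, isOpen_univ, univ_nonempty, univ_nonempty,
      fun n _ i => i.elim0⟩
  | succ d ih =>
    obtain ⟨U0, V0, hU0o, hV0o, hU0n, hV0n, h0⟩ := ih (fun i => U i.succ) (fun i => V i.succ)
      (fun i => hUo _) (fun i => hVo _) (fun i => hUn _) (fun i => hVn _)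
    obtain ⟨U', V', hU'o, hV'o, hU'n, hV'n, h'⟩ := wm_pair T hT hwm (U 0) (V 0) U0 V0
      (hUo 0) (hVo 0) hU0o hV0o (hUn 0) (hVn 0) hU0n hV0n
    refine ⟨U', V', hU'o, hV'o, hU'n, hV'n, fun n hn i => ?_⟩
    obtain ⟨h1, h2⟩ := h' n hn
    refine Fin.cases ?_ ?_ i
    · exact h1
    · exact fun j => h0 n h2 j

/-- Simultaneous large transition times for finitely many pairs. -/
lemma wm_product (d : ℕ) (U V : Fin d → Set X) (hUo : ∀ i, IsOpen (U i))
    (hVo : ∀ i, IsOpen (V i)) (hUn : ∀ i, (U i).Nonempty) (hVn : ∀ i, (V i).Nonempty)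
    (m : ℕ) :
    ∃ n, m ≤ n ∧ ∀ i, ∃ x ∈ U i, T^[n] x ∈ V i := by
  obtain ⟨U', V', hU'o, hV'o, hU'n, hV'n, h'⟩ :=
    wm_finite T hT hwm d U V hUo hVo hUn hVn
  obtain ⟨n, hn, hx⟩ := wm_large T hT hwm m U' V' hU'o hV'o hU'n hV'n
  exact ⟨n, hn, h' n hx⟩

/-- No isolated points. -/
lemma wm_not_isolated (a : X) : ¬ IsOpen ({a} : Set X) := by
  intro h
  obtain ⟨b, hb⟩ := exists_ne a
  obtain ⟨n, q, ⟨p, hp, hpq⟩, hqV⟩ := hwm (({a} : Set X) ×ˢ ({a} : Set X))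
    (({a} : Set X) ×ˢ (Metric.ball b (dist a b)))
    (h.prod h) (h.prod Metric.isOpen_ball)
    ⟨(a, a), rfl, rfl⟩
    ⟨(a, b), rfl, by simp [Metric.mem_ball, dist_comm, dist_pos.mpr (Ne.symm hb)]⟩
  rw [iter_prod] at hpq
  subst hpq
  have hp1 : p.1 = a := hp.1
  have hp2 : p.2 = a := hp.2
  have h1 : T^[n] p.1 = a := hqV.1
  have h2 : T^[n] p.2 ∈ Metric.ball b (dist a b) := hqV.2
  have e1 : T^[n] p.2 = a := by
    calc T^[n] p.2 = T^[n] p.1 := by rw [hp1, hp2]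
    _ = a := h1
  rw [e1] at h2
  have : dist a b < dist a b := by
    have := Metric.mem_ball.mp h2
    rwa [dist_comm] at this
  exact lt_irrefl _ this

lemma wm_infinite : Infinite X := by
  by_contra h
  have : Finite X := not_infinite_iff_finite.mp h
  obtain ⟨a⟩ : Nonempty X := inferInstance
  have : IsOpen ({a} : Set X) := by
    rw [← isClosed_compl_iff]
    exact (Set.toFinite _).isClosed
  exact wm_not_isolated T hT hwm a this

/-- The key dense open sets. -/
lemma wm_dense_open (d : ℕ) (V : Fin d → Set X) (hVo : ∀ i, IsOpen (V i))
    (hVn : ∀ i, (V i).Nonempty) (N : ℕ) :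
    IsOpen {x : Fin d → X | ∃ n, N ≤ n ∧ ∀ i, T^[n] (x i) ∈ V i} ∧
    Dense {x : Fin d → X | ∃ n, N ≤ n ∧ ∀ i, T^[n] (x i) ∈ V i} := by
  constructor
  · have heq : {x : Fin d → X | ∃ n, N ≤ n ∧ ∀ i, T^[n] (x i) ∈ V i} =
        ⋃ n, ⋃ (_ : N ≤ n), ⋂ i, (fun x : Fin d → X => T^[n] (x i)) ⁻¹' (V i) := by
      ext x
      simp only [Set.mem_setOf_eq, Set.mem_iUnion, Set.mem_iInter, Set.mem_preimage]
      tauto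
    rw [heq]
    exact isOpen_iUnion fun n => isOpen_iUnion fun _ =>
      isOpen_iInter_of_finite fun i =>
        ((hT.iterate n).comp (continuous_apply i)).isOpen_preimage _ (hVo i)
  · rw [dense_iff_inter_open]
    rintro W hWo ⟨y, hy⟩
    obtain ⟨u, hu, husub⟩ := (isOpen_pi_iff'.mp hWo) y hy
    obtain ⟨n, hn, hsim⟩ := wm_product T hT hwm d u V (fun i => (hu i).1)
      hVo (fun i => ⟨y i, (hu i).2⟩) hVn N
    choose z hz1 hz2 using hsim
    refine ⟨z, husub ?_, n, hn, hz2⟩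
    exact fun i _ => hz1 i


end aux

theorem stmt10 {X : Type*} [MetricSpace X] [CompactSpace X] [Nontrivial X]
    (T : X → X) (hT : Continuous T)
    (hwm : ∀ U V : Set (X × X), IsOpen U → IsOpen V → U.Nonempty → V.Nonempty →
      ∃ n : ℕ, (((fun p : X × X => (T p.1, T p.2))^[n] '' U) ∩ V).Nonempty) :
    ∀ d : ℕ, 2 ≤ d → ∃ δ : ℝ, 0 < δ ∧
      {x : Fin d → X |
        liminf (fun n => ⨆ i : Fin d, ⨆ j : Fin d,
          dist (T^[n] (x i)) (T^[n] (x j))) atTop = 0 ∧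
        δ < limsup (fun n => ⨅ p : {p : Fin d × Fin d // p.1 ≠ p.2},
          dist (T^[n] (x p.1.1)) (T^[n] (x p.1.2))) atTop}
        ∈ residual (Fin d → X) := by
  intro d hd
  haveI : Infinite X := wm_infinite T hT hwm
  obtain ⟨c⟩ : Nonempty X := inferInstance
  -- d distinct points
  set e : ℕ ↪ X := Infinite.natEmbedding X with he
  set a : Fin d → X := fun i => e i with ha
  have hainj : Function.Injective a := by
    intro i j h
    have h2 : e (i : ℕ) = e (j : ℕ) := h
    have := e.injective h2
    exact Fin.ext this
  -- pairs subtype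
  have hdpos : 0 < d := by omega
  haveI : NeZero d := ⟨by omega⟩
  have h01 : ((⟨0, by omega⟩ : Fin d) : Fin d) ≠ ⟨1, by omega⟩ := by
    simp [Fin.ext_iff]
  set P := {p : Fin d × Fin d // p.1 ≠ p.2} with hP
  haveI hPne : Nonempty P := ⟨⟨(⟨0, by omega⟩, ⟨1, by omega⟩), h01⟩⟩
  have hPuniv : (Finset.univ : Finset P).Nonempty := Finset.univ_nonempty
  set m : ℝ := Finset.univ.inf' hPuniv (fun p : P => dist (a p.1.1) (a p.1.2)) with hm
  have hmpos : 0 < m := by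
    rw [hm, Finset.lt_inf'_iff]
    exact fun p _ => dist_pos.mpr fun h => p.2 (hainj h)
  set δ : ℝ := m / 3 with hδ
  refine ⟨δ, by rw [hδ]; linarith, ?_⟩
  haveI : Nonempty (Fin d) := ⟨⟨0, hdpos⟩⟩
  -- the dense open sets
  set S : (Fin d → Set X) → ℕ → Set (Fin d → X) :=
    fun V N => {x : Fin d → X | ∃ n, N ≤ n ∧ ∀ i, T^[n] (x i) ∈ V i} with hS
  have hSres : ∀ (V : Fin d → Set X), (∀ i, IsOpen (V i)) → (∀ i, (V i).Nonempty) →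
      ∀ N, S V N ∈ residual (Fin d → X) := by
    intro V hVo hVn N
    obtain ⟨ho, hd⟩ := wm_dense_open T hT hwm d V hVo hVn N
    exact residual_of_dense_open ho hd
  have hballpos : ∀ k : ℕ, (0:ℝ) < 1 / (k + 1) := fun k => by positivity
  set t : Set (Fin d → X) :=
    (⋂ (k : ℕ), ⋂ (N : ℕ), S (fun _ => Metric.ball c (1 / (k + 1))) N) ∩
      ⋂ (N : ℕ), S (fun i => Metric.ball (a i) (m / 6)) N with ht
  have htres : t ∈ residual (Fin d → X) := by
    apply Filter.inter_mem
    · rw [countable_iInter_mem]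
      intro k
      rw [countable_iInter_mem]
      intro N
      exact hSres _ (fun i => Metric.isOpen_ball) (fun i => ⟨c, Metric.mem_ball_self (hballpos k)⟩) N
    · rw [countable_iInter_mem]
      intro N
      exact hSres _ (fun i => Metric.isOpen_ball)
        (fun i => ⟨a i, Metric.mem_ball_self (by linarith)⟩) N
  refine Filter.mem_of_superset htres ?_
  rintro x ⟨hx1, hx2⟩
  simp only [Set.mem_iInter] at hx1 hx2
  have hdiam : ∀ n (i j : Fin d),
      dist (T^[n] (x i)) (T^[n] (x j)) ≤ Metric.diam (Set.univ : Set X) :=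
    fun n i j => Metric.dist_le_diam_of_mem isCompact_univ.isBounded
      (Set.mem_univ _) (Set.mem_univ _)
  constructor
  · -- liminf = 0
    set f : ℕ → ℝ := fun n => ⨆ i : Fin d, ⨆ j : Fin d,
      dist (T^[n] (x i)) (T^[n] (x j)) with hf
    have hf_le : ∀ n, f n ≤ Metric.diam (Set.univ : Set X) := fun n =>
      ciSup_le fun i => ciSup_le fun j => hdiam n i j
    have hf_nonneg : ∀ n, 0 ≤ f n := by
      intro n
      obtain ⟨i0⟩ : Nonempty (Fin d) := inferInstance
      have h1 : dist (T^[n] (x i0)) (T^[n] (x i0)) ≤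
          ⨆ j, dist (T^[n] (x i0)) (T^[n] (x j)) :=
        le_ciSup (f := fun j => dist (T^[n] (x i0)) (T^[n] (x j)))
          (Set.finite_range _).bddAbove i0
      have h2 : (⨆ j, dist (T^[n] (x i0)) (T^[n] (x j))) ≤ f n :=
        le_ciSup (f := fun i => ⨆ j, dist (T^[n] (x i)) (T^[n] (x j)))
          (Set.finite_range _).bddAbove i0
      simpa using h1.trans h2
    have hbdd : IsBoundedUnder (· ≥ ·) atTop f := isBoundedUnder_of ⟨0, fun n => hf_nonneg n⟩
    have hcob : IsCoboundedUnder (· ≥ ·) atTop f :=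
      (isBoundedUnder_of ⟨_, fun n => hf_le n⟩ :
        IsBoundedUnder (· ≤ ·) atTop f).isCoboundedUnder_ge
    refine le_antisymm ?_ (le_liminf_of_le hcob (Filter.Eventually.of_forall hf_nonneg))
    have key : ∀ ε : ℝ, 0 < ε → liminf f atTop ≤ ε := by
      intro ε hε
      refine liminf_le_of_frequently_le ?_ hbdd
      rw [frequently_atTop]
      intro N
      obtain ⟨k, hk⟩ := exists_nat_one_div_lt (show (0:ℝ) < ε / 2 by linarith)
      obtain ⟨n, hn, hin⟩ := hx1 k N
      refine ⟨n, hn, ?_⟩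
      refine ciSup_le fun i => ciSup_le fun j => ?_
      have hi := Metric.mem_ball.mp (hin i)
      have hj := Metric.mem_ball.mp (hin j)
      have := dist_triangle (T^[n] (x i)) c (T^[n] (x j))
      have hcj : dist c (T^[n] (x j)) = dist (T^[n] (x j)) c := dist_comm _ _
      have hk' : (1:ℝ) / (k + 1) < ε / 2 := hk
      linarith
    have : liminf f atTop ≤ 0 := by
      refine le_of_forall_pos_le_add ?_
      intro ε hε
      simpa using key ε hε
    exact this
  · -- δ < limsup
    set g : ℕ → ℝ := fun n => ⨅ p : {p : Fin d × Fin d // p.1 ≠ p.2},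
      dist (T^[n] (x p.1.1)) (T^[n] (x p.1.2)) with hg
    have hg_nonneg : ∀ n (p : {p : Fin d × Fin d // p.1 ≠ p.2}),
        (0:ℝ) ≤ dist (T^[n] (x p.1.1)) (T^[n] (x p.1.2)) := fun n p => dist_nonneg
    have hg_le : ∀ n, g n ≤ Metric.diam (Set.univ : Set X) := by
      intro n
      obtain ⟨p0⟩ : Nonempty {p : Fin d × Fin d // p.1 ≠ p.2} := hPne
      have h1 : g n ≤ dist (T^[n] (x p0.1.1)) (T^[n] (x p0.1.2)) := by
        refine ciInf_le ⟨0, ?_⟩ p0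
        rintro r ⟨p, rfl⟩
        exact hg_nonneg n p
      exact h1.trans (hdiam n _ _)
    have hfreq : ∃ᶠ n in atTop, 2 * m / 3 ≤ g n := by
      rw [frequently_atTop]
      intro N
      obtain ⟨n, hn, hin⟩ := hx2 N
      refine ⟨n, hn, ?_⟩
      refine le_ciInf fun p => ?_
      have hmle : m ≤ dist (a p.1.1) (a p.1.2) := by
        rw [hm]
        exact Finset.inf'_le _ (Finset.mem_univ p)
      have hi := Metric.mem_ball.mp (hin p.1.1)
      have hj := Metric.mem_ball.mp (hin p.1.2)
      have h4 := dist_triangle4 (a p.1.1) (T^[n] (x p.1.1)) (T^[n] (x p.1.2)) (a p.1.2)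
      have hc1 : dist (a p.1.1) (T^[n] (x p.1.1)) = dist (T^[n] (x p.1.1)) (a p.1.1) :=
        dist_comm _ _
      linarith
    have hlim : 2 * m / 3 ≤ limsup g atTop :=
      le_limsup_of_frequently_le hfreq (isBoundedUnder_of ⟨_, fun n => hg_le n⟩)
    calc δ = m / 3 := hδ
    _ < 2 * m / 3 := by linarith
    _ ≤ limsup g atTop := hlim
end

section
/- Let $\mu$ be a $\sigma$-finite, ergodic, $T$-invariant Borel measure, and suppose there exists $Y$ with $0<\mu(Y)<\infty$ such that $\sum_{n\ge0}P^n1_Y=\infty$ $\mu$-a.e. on $Y$, where $P$ is the Perron–Frobenius operator. Then $\mu$ is conservative. -/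
/-!
Testing the transfer-operator identity `∫_A Pⁿ 1_Y = μ(Y ∩ T⁻ⁿ A)` on the set `B` of points of `Y`
that never return to `Y` gives `∫_B ∑ₙ Pⁿ 1_Y = ∑ₙ μ(Y ∩ T⁻ⁿ B) ≤ μ Y`, since the `T⁻ⁿ B` are
disjoint; the integrand is infinite on `B`, so `μ B = 0` and `Y` is recurrent. Then
`Z = ⋃ₙ T⁻ⁿ Y` is invariant mod `μ`, hence conull by ergodicity, and Maharam's argument applies:
if `W ⊆ T⁻ᵏ Y` had positive measure and were wandering, the `M` disjoint copies `T⁻ⁱ W`, `i < M`,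
would lie in `⋃_{t < M + k} T⁻ᵗ Y`, whose measure grows sublinearly in `M` because almost every
point of `Y` returns.
-/

open MeasureTheory Filter ENNReal Function

theorem ENNReal.tsum_ofReal_eq_top_of_tendsto_sum {f : ℕ → ℝ}
    (hf : Tendsto (fun N => ∑ n ∈ Finset.range N, f n) atTop atTop) :
    ∑' n, ENNReal.ofReal (f n) = ∞ := by
  refine top_le_iff.1 (le_of_tendsto' (ENNReal.tendsto_ofReal_atTop.comp hf) fun N => ?_)
  calc ENNReal.ofReal (∑ n ∈ Finset.range N, f n)
      ≤ ∑ n ∈ Finset.range N, ENNReal.ofReal (f n) :=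
        Finset.le_sum_of_subadditive _ ENNReal.ofReal_zero.le (fun _ _ => ENNReal.ofReal_add_le) _ _
    _ ≤ ∑' n, ENNReal.ofReal (f n) := ENNReal.sum_le_tsum _

namespace MeasureTheory

def IsTransferOperator {X : Type*} [MeasurableSpace X] (T : X → X) (mu : Measure X)
    (P : (X → ℝ) → (X → ℝ)) : Prop :=
  ∀ f : X → ℝ, Integrable f mu → ∀ A : Set X, MeasurableSet A →
    ∫ x in A, P f x ∂mu = ∫ x in T ⁻¹' A, f x ∂mu

variable {X : Type*}

def noReturnWithin (T : X → X) (Y : Set X) (L : ℕ) : Set X :=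
  Y \ ⋃ j ∈ Finset.range L, T^[j + 1] ⁻¹' Y

theorem pairwise_disjoint_preimage_iterate_sdiff_iUnion (T : X → X) (Y : Set X) :
    Pairwise (Disjoint on fun n => T^[n] ⁻¹' (Y \ ⋃ j, T^[j + 1] ⁻¹' Y)) := by
  refine (pairwise_disjoint_on _).2 fun m n hmn => Set.disjoint_left.2 fun x hm hn => ?_
  refine hm.2 (Set.mem_iUnion.2 ⟨n - m - 1, ?_⟩)
  rw [Set.mem_preimage, ← Function.iterate_add_apply, show n - m - 1 + 1 + m = n by omega]
  exact hn.1

-- Split at the last visit to `Y` before time `M + L`.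
theorem biUnion_range_preimage_iterate_subset (T : X → X) (Y : Set X) (M L : ℕ) :
    ⋃ t ∈ Finset.range (M + L), T^[t] ⁻¹' Y ⊆
      (⋃ t ∈ Finset.range M, T^[t] ⁻¹' noReturnWithin T Y L) ∪
        ⋃ t ∈ Finset.range L, T^[M + t] ⁻¹' Y := by
  classical
  intro x hx
  simp only [Set.mem_iUnion, Finset.mem_range, Set.mem_preimage, exists_prop] at hx
  obtain ⟨t, htML, ht⟩ := hx
  set s := Nat.findGreatest (fun t => T^[t] x ∈ Y) (M + L - 1)
  have hs : T^[s] x ∈ Y := Nat.findGreatest_spec (P := fun t => T^[t] x ∈ Y) (by omega) ht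
  have hsle : s ≤ M + L - 1 := Nat.findGreatest_le _
  rcases Nat.lt_or_ge s M with hsM | hsM
  · refine Or.inl (Set.mem_biUnion (Finset.mem_range.2 hsM) ⟨hs, ?_⟩)
    simp only [Set.mem_iUnion, Finset.mem_range, Set.mem_preimage, exists_prop, not_exists,
      not_and, ← Function.iterate_add_apply]
    exact fun j hj => Nat.findGreatest_is_greatest (P := fun t => T^[t] x ∈ Y) (n := M + L - 1)
      (k := j + 1 + s) (by omega) (by omega)
  · refine Or.inr (Set.mem_biUnion (Finset.mem_range.2 (show s - M < L by omega)) ?_)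
    rwa [Set.mem_preimage, Nat.add_sub_cancel' hsM]

variable [MeasurableSpace X] {T : X → X} {mu : Measure X}

theorem MeasurePreserving.measure_preimage_iterate (hmp : MeasurePreserving T mu mu)
    {A : Set X} (hA : MeasurableSet A) (t : ℕ) : mu (T^[t] ⁻¹' A) = mu A :=
  (hmp.iterate t).measure_preimage hA.nullMeasurableSet

theorem measurableSet_noReturnWithin (hT : Measurable T) {Y : Set X} (hYm : MeasurableSet Y)
    (L : ℕ) : MeasurableSet (noReturnWithin T Y L) :=
  hYm.diff (Finset.measurableSet_biUnion _ fun j _ => (hT.iterate (j + 1)) hYm)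

namespace IsTransferOperator

variable {P : (X → ℝ) → (X → ℝ)}

theorem integral_eq (hP : IsTransferOperator T mu P) {f : X → ℝ} (hf : Integrable f mu) :
    ∫ x, P f x ∂mu = ∫ x, f x ∂mu := by
  simpa using hP f hf Set.univ MeasurableSet.univ

theorem integrable (hP : IsTransferOperator T mu P) {f : X → ℝ} (hf : Integrable f mu)
    (h0 : ∫ x, f x ∂mu ≠ 0) : Integrable (P f) mu := by
  by_contra hPf
  exact h0 (by rw [← hP.integral_eq hf, integral_undef hPf])

theorem integrable_and_setIntegral_iterate (hT : Measurable T) (hP : IsTransferOperator T mu P)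
    {f : X → ℝ} (hf : Integrable f mu) (h0 : ∫ x, f x ∂mu ≠ 0) (n : ℕ) :
    Integrable (P^[n] f) mu ∧ ∀ A : Set X, MeasurableSet A →
      ∫ x in A, P^[n] f x ∂mu = ∫ x in T^[n] ⁻¹' A, f x ∂mu := by
  induction n with
  | zero => exact ⟨hf, fun A _ => rfl⟩
  | succ n ih =>
    have hint : ∫ x, P^[n] f x ∂mu = ∫ x, f x ∂mu := by
      simpa using ih.2 Set.univ MeasurableSet.univ
    refine ⟨?_, fun A hA => ?_⟩
    · rw [Function.iterate_succ_apply']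
      exact hP.integrable ih.1 (hint ▸ h0)
    · rw [Function.iterate_succ_apply', hP _ ih.1 A hA, ih.2 _ (hT hA), ← Set.preimage_comp,
        ← Function.iterate_succ']

theorem integrable_and_setIntegral_iterate_indicator (hT : Measurable T)
    (hP : IsTransferOperator T mu P) {Y : Set X} (hYm : MeasurableSet Y) (hY0 : mu Y ≠ 0)
    (hYfin : mu Y ≠ ∞) (n : ℕ) :
    Integrable (P^[n] (Y.indicator 1)) mu ∧ ∀ A : Set X, MeasurableSet A →
      ∫ x in A, P^[n] (Y.indicator 1) x ∂mu = mu.real (Y ∩ T^[n] ⁻¹' A) := by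
  have hY : Integrable (Y.indicator (1 : X → ℝ)) mu :=
    (integrable_indicator_iff hYm).2 (integrableOn_const (C := (1 : ℝ)) hYfin)
  have hYint : ∫ x, Y.indicator (1 : X → ℝ) x ∂mu ≠ 0 := by
    rw [integral_indicator_one hYm, measureReal_def]
    exact (ENNReal.toReal_pos hY0 hYfin).ne'
  obtain ⟨hint, hset⟩ := hP.integrable_and_setIntegral_iterate hT hY hYint n
  refine ⟨hint, fun A hA => ?_⟩
  rw [hset A hA, setIntegral_indicator hYm]
  simp [Set.inter_comm]

theorem lintegral_ofReal_iterate_indicator (hT : Measurable T) (hP : IsTransferOperator T mu P)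
    {Y : Set X} (hYm : MeasurableSet Y) (hY0 : mu Y ≠ 0) (hYfin : mu Y ≠ ∞) (n : ℕ)
    {A : Set X} (hA : MeasurableSet A) :
    ∫⁻ x in A, ENNReal.ofReal (P^[n] (Y.indicator 1) x) ∂mu = mu (Y ∩ T^[n] ⁻¹' A) := by
  obtain ⟨hint, hset⟩ := hP.integrable_and_setIntegral_iterate_indicator hT hYm hY0 hYfin n
  have hnonneg : 0 ≤ᵐ[mu] P^[n] (Y.indicator 1) :=
    ae_nonneg_of_forall_setIntegral_nonneg hint fun s hs _ => (hset s hs).symm ▸ measureReal_nonneg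
  rw [← ofReal_integral_eq_lintegral_ofReal hint.restrict (ae_restrict_of_ae hnonneg), hset A hA,
    ofReal_measureReal (measure_ne_top_of_subset Set.inter_subset_left hYfin)]

end IsTransferOperator

theorem measure_eq_zero_of_tsum_eq_top {B : Set X} {g : ℕ → X → ℝ≥0∞}
    (hg : ∀ n, AEMeasurable (g n) (mu.restrict B))
    (htop : ∀ᵐ x ∂mu.restrict B, ∑' n, g n x = ∞)
    (hfin : ∑' n, ∫⁻ x in B, g n x ∂mu ≠ ∞) : mu B = 0 := by
  rw [← lintegral_tsum hg] at hfin
  have hfalse : ∀ᵐ x ∂mu.restrict B, False := by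
    filter_upwards [ae_lt_top' (AEMeasurable.tsum hg) hfin, htop] with x hlt htop
    exact hlt.ne htop
  rwa [eventually_false_iff_eq_bot, ae_eq_bot, Measure.restrict_eq_zero] at hfalse

theorem ae_exists_iterate_succ_mem_of_tendsto_sum (hT : Measurable T)
    {P : (X → ℝ) → (X → ℝ)} (hP : IsTransferOperator T mu P)
    {Y : Set X} (hYm : MeasurableSet Y) (hY0 : mu Y ≠ 0) (hYfin : mu Y ≠ ∞)
    (hdiv : ∀ᵐ x ∂(mu.restrict Y),
      Tendsto (fun N => ∑ n ∈ Finset.range N, P^[n] (Y.indicator 1) x) atTop atTop) :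
    ∀ᵐ x ∂mu, x ∈ Y → ∃ n, T^[n + 1] x ∈ Y := by
  set B := Y \ ⋃ j, T^[j + 1] ⁻¹' Y with hB
  have hBm : MeasurableSet B :=
    hYm.diff (MeasurableSet.iUnion fun j => (hT.iterate (j + 1)) hYm)
  suffices mu B = 0 by
    filter_upwards [measure_eq_zero_iff_ae_notMem.1 this] with x hx hxY
    simpa [hB, hxY] using hx
  refine measure_eq_zero_of_tsum_eq_top
    (g := fun n x => ENNReal.ofReal (P^[n] (Y.indicator 1) x)) (fun n => ?_) ?_ ?_
  · exact (hP.integrable_and_setIntegral_iterate_indicator hT hYm hY0 hYfin n).1.aemeasurable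
      |>.restrict.ennreal_ofReal
  · filter_upwards [ae_restrict_of_ae_restrict_of_subset Set.sdiff_subset hdiv] with x hx
    exact ENNReal.tsum_ofReal_eq_top_of_tendsto_sum hx
  · simp_rw [hP.lintegral_ofReal_iterate_indicator hT hYm hY0 hYfin _ hBm]
    rw [← measure_iUnion ?_ fun n => hYm.inter ((hT.iterate n) hBm)]
    · exact measure_ne_top_of_subset (Set.iUnion_subset fun _ => Set.inter_subset_left) hYfin
    · exact fun m n hmn => ((pairwise_disjoint_preimage_iterate_sdiff_iUnion T Y hmn).mono
        Set.inter_subset_right Set.inter_subset_right)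

theorem measure_compl_iUnion_preimage_iterate_eq_zero (hT : Measurable T)
    (herg : ∀ A : Set X, MeasurableSet A → mu (symmDiff (T ⁻¹' A) A) = 0 →
      mu A = 0 ∨ mu Aᶜ = 0)
    {Y : Set X} (hYm : MeasurableSet Y) (hY0 : mu Y ≠ 0)
    (hrec : ∀ᵐ x ∂mu, x ∈ Y → ∃ n, T^[n + 1] x ∈ Y) :
    mu (⋃ k, T^[k] ⁻¹' Y)ᶜ = 0 := by
  set Z := ⋃ k, T^[k] ⁻¹' Y
  have hZm : MeasurableSet Z := MeasurableSet.iUnion fun k => (hT.iterate k) hYm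
  have hYZ : Y ⊆ Z := Set.subset_iUnion_of_subset 0 subset_rfl
  -- `T ⁻¹' Z ⊆ Z`, and a point of `Z \ T ⁻¹' Z` lies in `Y` and never returns to it
  have hinv : mu (symmDiff (T ⁻¹' Z) Z) = 0 := by
    refine measure_mono_null (fun x hx => ?_) (ae_iff.1 hrec)
    simp only [Set.mem_symmDiff, Set.mem_preimage, Set.mem_iUnion, Z, Set.mem_ofPred_eq] at hx ⊢
    rcases hx with ⟨⟨k, hk⟩, hnot⟩ | ⟨⟨k, hk⟩, hnot⟩
    · exact absurd ⟨k + 1, hk⟩ hnot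
    · cases k with
      | zero => exact fun h => hnot (h hk)
      | succ k => exact absurd ⟨k, hk⟩ hnot
  rcases herg Z hZm hinv with hZ | hZ
  · exact absurd (measure_mono_null hYZ hZ) hY0
  · exact hZ

theorem measure_biUnion_range_preimage_iterate_le (hmp : MeasurePreserving T mu mu)
    {Y : Set X} (hYm : MeasurableSet Y) (M L : ℕ) :
    mu (⋃ t ∈ Finset.range (M + L), T^[t] ⁻¹' Y) ≤
      M * mu (noReturnWithin T Y L) + L * mu Y := by
  calc mu (⋃ t ∈ Finset.range (M + L), T^[t] ⁻¹' Y)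
      ≤ mu (⋃ t ∈ Finset.range M, T^[t] ⁻¹' noReturnWithin T Y L) +
          mu (⋃ t ∈ Finset.range L, T^[M + t] ⁻¹' Y) :=
        (measure_mono (biUnion_range_preimage_iterate_subset T Y M L)).trans (measure_union_le _ _)
    _ ≤ ∑ t ∈ Finset.range M, mu (T^[t] ⁻¹' noReturnWithin T Y L) +
          ∑ t ∈ Finset.range L, mu (T^[M + t] ⁻¹' Y) :=
        add_le_add (measure_biUnion_finset_le _ _) (measure_biUnion_finset_le _ _)
    _ = M * mu (noReturnWithin T Y L) + L * mu Y := by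
        simp [hmp.measure_preimage_iterate (measurableSet_noReturnWithin hmp.measurable hYm L),
          hmp.measure_preimage_iterate hYm]

theorem tendsto_measure_noReturnWithin (hT : Measurable T) {Y : Set X} (hYm : MeasurableSet Y)
    (hYfin : mu Y ≠ ∞) (hrec : ∀ᵐ x ∂mu, x ∈ Y → ∃ n, T^[n + 1] x ∈ Y) :
    Tendsto (fun L => mu (noReturnWithin T Y L)) atTop (nhds 0) := by
  have hanti : Antitone (noReturnWithin T Y) := fun L L' hLL' =>
    Set.sdiff_subset_sdiff_right (Set.biUnion_subset_biUnion_left (by simpa using hLL'))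
  have hnull : mu (⋂ L, noReturnWithin T Y L) = 0 := by
    refine measure_mono_null (fun x hx => ?_) (ae_iff.1 hrec)
    simp only [Set.mem_iInter, noReturnWithin, Set.mem_sdiff, Set.mem_iUnion, Finset.mem_range,
      Set.mem_preimage, exists_prop, not_exists, not_and] at hx
    rintro h
    obtain ⟨n, hn⟩ := h (hx 0).1
    exact (hx (n + 1)).2 n (Nat.lt_succ_self n) hn
  rw [← hnull]
  exact tendsto_measure_iInter_atTop
    (fun L => (measurableSet_noReturnWithin hT hYm L).nullMeasurableSet) hanti
    ⟨0, measure_ne_top_of_subset Set.sdiff_subset hYfin⟩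

theorem measure_biUnion_range_preimage_iterate_of_wandering (hmp : MeasurePreserving T mu mu)
    {W : Set X} (hWm : MeasurableSet W) (hW : ∀ n, 1 ≤ n → mu (W ∩ T^[n] ⁻¹' W) = 0) (M : ℕ) :
    mu (⋃ i ∈ Finset.range M, T^[i] ⁻¹' W) = M * mu W := by
  have hdisj : ∀ i j, i < j → AEDisjoint mu (T^[i] ⁻¹' W) (T^[j] ⁻¹' W) := by
    intro i j hij
    have hsplit : T^[j] ⁻¹' W = T^[i] ⁻¹' (T^[j - i] ⁻¹' W) := by
      rw [← Set.preimage_comp, ← Function.iterate_add, Nat.sub_add_cancel hij.le]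
    rw [AEDisjoint, hsplit, ← Set.preimage_inter,
      hmp.measure_preimage_iterate (hWm.inter ((hmp.measurable.iterate _) hWm))]
    exact hW _ (by omega)
  rw [measure_biUnion_finset₀ (fun i _ j _ hij => ?_)
    fun i _ => ((hmp.measurable.iterate i) hWm).nullMeasurableSet]
  · simp [hmp.measure_preimage_iterate hWm]
  · rcases lt_or_gt_of_ne hij with h | h
    · exact hdisj i j h
    · exact (hdisj j i h).symm

-- Maharam's recurrence theorem
theorem exists_measure_inter_preimage_iterate_pos (hmp : MeasurePreserving T mu mu)
    {Y : Set X} (hYm : MeasurableSet Y) (hYfin : mu Y ≠ ∞)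
    (hrec : ∀ᵐ x ∂mu, x ∈ Y → ∃ n, T^[n + 1] x ∈ Y)
    {W : Set X} (hWm : MeasurableSet W) {k : ℕ} (hWY : W ⊆ T^[k] ⁻¹' Y) (hW0 : mu W ≠ 0) :
    ∃ n, 1 ≤ n ∧ 0 < mu (W ∩ T^[n] ⁻¹' W) := by
  by_contra! hwander
  have hWfin : mu W ≠ ∞ :=
    measure_ne_top_of_subset hWY (hmp.measure_preimage_iterate hYm k ▸ hYfin)
  obtain ⟨L, hL⟩ : ∃ L, mu (noReturnWithin T Y L) < mu W :=
    ((tendsto_order.1 (tendsto_measure_noReturnWithin hmp.measurable hYm hYfin hrec)).2 _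
      (pos_iff_ne_zero.2 hW0)).exists
  set e := mu (noReturnWithin T Y L)
  have he : e ≠ ∞ := ne_top_of_lt hL
  obtain ⟨M, hM⟩ : ∃ M : ℕ, k * e + L * mu Y < M * (mu W - e) :=
    ENNReal.exists_nat_mul_gt (tsub_pos_of_lt hL).ne' (by finiteness)
  -- the `M` disjoint copies `T^[i] ⁻¹' W` all enter `Y` before time `M + k`
  have hcover : M * mu W ≤ (M + k) * e + L * mu Y := calc
    M * mu W = mu (⋃ i ∈ Finset.range M, T^[i] ⁻¹' W) :=
      (measure_biUnion_range_preimage_iterate_of_wandering hmp hWm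
        (fun n hn => nonpos_iff_eq_zero.1 (hwander n hn)) M).symm
    _ ≤ mu (⋃ t ∈ Finset.range (M + k + L), T^[t] ⁻¹' Y) := by
      refine measure_mono (Set.iUnion₂_subset fun i hi => ?_)
      refine Set.subset_biUnion_of_mem (u := fun t => T^[t] ⁻¹' Y)
        (Finset.mem_range.2 (show k + i < M + k + L by simp at hi; omega)) |>.trans' ?_
      rw [Function.iterate_add, Set.preimage_comp]
      exact Set.preimage_mono hWY
    _ ≤ (M + k) * e + L * mu Y := by
      exact_mod_cast measure_biUnion_range_preimage_iterate_le hmp hYm (M + k) L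
  have : M * mu W < M * mu W := calc
    M * mu W ≤ M * e + (k * e + L * mu Y) := by rw [← add_assoc, ← add_mul]; exact hcover
    _ < M * e + M * (mu W - e) := ENNReal.add_lt_add_left (by finiteness) hM
    _ = M * mu W := by rw [← mul_add, add_tsub_cancel_of_le hL.le]
  exact this.false

end MeasureTheory

theorem stmt12_general {X : Type*} [MeasurableSpace X]
    (T : X → X) (hT : Measurable T)
    (mu : Measure X)
    (hinv : ∀ A : Set X, MeasurableSet A → mu (T ⁻¹' A) = mu A)
    (herg : ∀ A : Set X, MeasurableSet A → mu (symmDiff (T ⁻¹' A) A) = 0 →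
      mu A = 0 ∨ mu Aᶜ = 0)
    (P : (X → ℝ) → (X → ℝ))
    (hP : ∀ f : X → ℝ, Integrable f mu → ∀ A : Set X, MeasurableSet A →
      ∫ x in A, P f x ∂mu = ∫ x in T ⁻¹' A, f x ∂mu)
    (Y : Set X) (hYm : MeasurableSet Y) (hY0 : 0 < mu Y) (hYfin : mu Y < ∞)
    (hdiv : ∀ᵐ x ∂(mu.restrict Y),
      Tendsto (fun N => ∑ n ∈ Finset.range N, P^[n] (Y.indicator 1) x)
        atTop atTop) :
    ∀ A : Set X, MeasurableSet A → 0 < mu A →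
      ∃ n : ℕ, 1 ≤ n ∧ 0 < mu (A ∩ T^[n] ⁻¹' A) := by
  intro A hA hA0
  have hmp : MeasurePreserving T mu mu :=
    ⟨hT, Measure.ext fun s hs => by rw [Measure.map_apply hT hs, hinv s hs]⟩
  have hrec := ae_exists_iterate_succ_mem_of_tendsto_sum hT hP hYm hY0.ne' hYfin.ne hdiv
  have hZ := measure_compl_iUnion_preimage_iterate_eq_zero hT herg hYm hY0.ne' hrec
  obtain ⟨k, hk⟩ : ∃ k, mu (A ∩ T^[k] ⁻¹' Y) ≠ 0 := by
    by_contra! h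
    have hAZ := measure_inter_conull (s := A) hZ
    rw [Set.inter_iUnion, measure_iUnion_null h] at hAZ
    exact hA0.ne' hAZ.symm
  obtain ⟨n, hn, hpos⟩ := exists_measure_inter_preimage_iterate_pos hmp hYm hYfin.ne hrec
    (hA.inter ((hT.iterate k) hYm)) Set.inter_subset_right hk
  exact ⟨n, hn, hpos.trans_le (measure_mono (Set.inter_subset_inter Set.inter_subset_left
    (Set.preimage_mono Set.inter_subset_left)))⟩

theorem stmt12 {X : Type*} [MeasurableSpace X]
    (T : X → X) (hT : Measurable T)
    (mu : Measure X) [SigmaFinite mu]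
    (hinv : ∀ A : Set X, MeasurableSet A → mu (T ⁻¹' A) = mu A)
    (herg : ∀ A : Set X, MeasurableSet A → mu (symmDiff (T ⁻¹' A) A) = 0 →
      mu A = 0 ∨ mu Aᶜ = 0)
    (P : (X → ℝ) → (X → ℝ))
    (hP : ∀ f : X → ℝ, Integrable f mu → ∀ A : Set X, MeasurableSet A →
      ∫ x in A, P f x ∂mu = ∫ x in T ⁻¹' A, f x ∂mu)
    (Y : Set X) (hYm : MeasurableSet Y) (hY0 : 0 < mu Y) (hYfin : mu Y < ∞)
    (hdiv : ∀ᵐ x ∂(mu.restrict Y),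
      Tendsto (fun N => ∑ n ∈ Finset.range N, P^[n] (Y.indicator 1) x)
        atTop atTop) :
    ∀ A : Set X, MeasurableSet A → 0 < mu A →
      ∃ n : ℕ, 1 ≤ n ∧ 0 < mu (A ∩ T^[n] ⁻¹' A) :=
  stmt12_general T hT mu hinv herg P hP Y hYm hY0 hYfin hdiv
end

section
/- For the Manneville–Pomeau map $T_\alpha(x)=x(1+2^\alpha x^\alpha)$ on $[0,1/2)$ and $T_\alpha(x)=2x-1$ on $[1/2,1]$, define $y_0=1/2$ and let $y_{n+1}$ be the unique preimage of $y_n$ under $T_\alpha$ in $[0,y_n]$. Then $y_n\searrow 0$ and $y_n\sim n^{-1/\alpha}$, i.e. $\lim_n y_n\, n^{1/\alpha}$ exists in $(0,\infty)$. -/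
/-!
On the backward orbit the left branch gives the recurrence `y n = y (n+1) (1 + c y (n+1)^α)`
with `c = 2^α`, so `y` decreases to a nonnegative limit, which cannot be positive as the map
`x ↦ x (1 + c x^α)` has no positive fixed point. Setting `u n = y n ^ (-α)`, the recurrence gives
`u (n+1) - u n = c (1 - (1 + t)^(-α)) / t` with `t = c y (n+1)^α → 0`, hence the increments
tend to `c α`, so `u n / n → c α` by Cesàro and `y n n^(1/α) → (c α)^(-1/α)`.
-/

open Filter Topology

theorem tendsto_div_natCast_of_tendsto_sub {u : ℕ → ℝ} {l : ℝ}
    (h : Tendsto (fun n => u (n + 1) - u n) atTop (𝓝 l)) :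
    Tendsto (fun n : ℕ => u n / n) atTop (𝓝 l) := by
  have hmean : Tendsto (fun n : ℕ => (u n - u 0) / n) atTop (𝓝 l) := by
    refine h.cesaro.congr fun n => ?_
    rw [Finset.sum_range_sub u, div_eq_inv_mul]
  simpa [sub_div] using hmean.add (tendsto_const_div_atTop_nhds_zero_nat (u 0))

theorem tendsto_one_sub_one_add_rpow_neg_div (α : ℝ) :
    Tendsto (fun t : ℝ => (1 - (1 + t) ^ (-α)) / t) (𝓝[≠] 0) (𝓝 α) := by
  have hderiv : HasDerivAt (fun t : ℝ => (1 + t) ^ (-α)) (-α) 0 := by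
    simpa using (Real.hasDerivAt_rpow_const (x := 1 + 0) (p := -α)
      (Or.inl (by norm_num))).comp_const_add (1 : ℝ) 0
  refine (neg_neg α ▸ (hasDerivAt_iff_tendsto_slope.mp hderiv).neg).congr fun t => ?_
  simp [slope, div_eq_mul_inv]
  ring

theorem rpow_neg_div_rpow_neg_one_div {α y x : ℝ} (hα : α ≠ 0) (hy : 0 < y) (hx : 0 ≤ x) :
    (y ^ (-α) / x) ^ (-(1 / α)) = y * x ^ (1 / α) := by
  rw [Real.div_rpow (Real.rpow_nonneg hy.le _) hx, ← Real.rpow_mul hy.le,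
    Real.rpow_neg hx, div_eq_mul_inv, inv_inv, neg_mul_neg, mul_one_div_cancel hα, Real.rpow_one]

section Recurrence

variable {α c : ℝ} {y : ℕ → ℝ}

theorem strictAnti_of_eq_mul_one_add (hc : 0 < c) (hpos : ∀ n, 0 < y n)
    (hrec : ∀ n, y n = y (n + 1) * (1 + c * y (n + 1) ^ α)) : StrictAnti y :=
  strictAnti_nat_of_succ_lt fun n => by
    have : 0 < c * y (n + 1) ^ α := mul_pos hc (Real.rpow_pos_of_pos (hpos _) α)
    rw [hrec n]
    exact lt_mul_of_one_lt_right (hpos _) (by linarith)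

theorem tendsto_zero_of_eq_mul_one_add (hc : 0 < c) (hpos : ∀ n, 0 < y n)
    (hrec : ∀ n, y n = y (n + 1) * (1 + c * y (n + 1) ^ α)) : Tendsto y atTop (𝓝 0) := by
  have hbdd : BddBelow (Set.range y) := ⟨0, Set.forall_mem_range.2 fun n => (hpos n).le⟩
  have hlim := tendsto_atTop_ciInf (strictAnti_of_eq_mul_one_add hc hpos hrec).antitone hbdd
  set L := ⨅ n, y n
  have hL : 0 ≤ L := le_ciInf fun n => (hpos n).le
  rcases hL.eq_or_lt with hL0 | hLpos
  · rwa [← hL0] at hlim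
  have hshift := hlim.comp (tendsto_add_atTop_nat 1)
  have hfix : Tendsto (fun n => y (n + 1) * (1 + c * y (n + 1) ^ α)) atTop
      (𝓝 (L * (1 + c * L ^ α))) :=
    hshift.mul (tendsto_const_nhds.add
      (((Real.continuousAt_rpow_const L α (Or.inl hLpos.ne')).tendsto.comp hshift).const_mul c))
  have hL_eq : L = L * (1 + c * L ^ α) := tendsto_nhds_unique (hlim.congr hrec) hfix
  have : 0 < L * (c * L ^ α) := mul_pos hLpos (mul_pos hc (Real.rpow_pos_of_pos hLpos α))
  nlinarith

theorem rpow_neg_succ_sub_rpow_neg (hc : 0 < c) (hpos : ∀ n, 0 < y n)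
    (hrec : ∀ n, y n = y (n + 1) * (1 + c * y (n + 1) ^ α)) (n : ℕ) :
    y (n + 1) ^ (-α) - y n ^ (-α) =
      c * ((1 - (1 + c * y (n + 1) ^ α) ^ (-α)) / (c * y (n + 1) ^ α)) := by
  have hy := hpos (n + 1)
  have ht : 0 < c * y (n + 1) ^ α := mul_pos hc (Real.rpow_pos_of_pos hy α)
  have hprod : y (n + 1) ^ (-α) * (c * y (n + 1) ^ α) = c := by
    rw [mul_left_comm, ← Real.rpow_add hy, neg_add_cancel, Real.rpow_zero, mul_one]
  rw [hrec n, Real.mul_rpow hy.le (by linarith)]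
  generalize c * y (n + 1) ^ α = t at ht hprod ⊢
  rw [← hprod]
  field_simp

theorem tendsto_mul_rpow_inv_of_eq_mul_one_add (hα : 0 < α) (hc : 0 < c)
    (hpos : ∀ n, 0 < y n) (hrec : ∀ n, y n = y (n + 1) * (1 + c * y (n + 1) ^ α)) :
    Tendsto (fun n : ℕ => y n * (n : ℝ) ^ (1 / α)) atTop (𝓝 ((c * α) ^ (-(1 / α)))) := by
  have hy0 := (tendsto_zero_of_eq_mul_one_add hc hpos hrec).comp (tendsto_add_atTop_nat 1)
  have ht : Tendsto (fun n => c * y (n + 1) ^ α) atTop (𝓝[≠] 0) := by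
    refine tendsto_nhdsWithin_of_tendsto_nhds_of_eventually_within _ ?_
      (Eventually.of_forall fun n => (mul_pos hc (Real.rpow_pos_of_pos (hpos _) α)).ne')
    simpa [Real.zero_rpow hα.ne'] using
      ((Real.continuousAt_rpow_const 0 α (Or.inr hα.le)).tendsto.comp hy0).const_mul c
  have hgrowth : Tendsto (fun n : ℕ => y n ^ (-α) / n) atTop (𝓝 (c * α)) :=
    tendsto_div_natCast_of_tendsto_sub <|
      (((tendsto_one_sub_one_add_rpow_neg_div α).comp ht).const_mul c).congr fun n =>
        (rpow_neg_succ_sub_rpow_neg hc hpos hrec n).symm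
  refine (((Real.continuousAt_rpow_const _ _
    (Or.inl (mul_pos hc hα).ne')).tendsto.comp hgrowth)).congr fun n => ?_
  exact rpow_neg_div_rpow_neg_one_div hα.ne' (hpos n) n.cast_nonneg

end Recurrence

section BackwardOrbit

variable {α : ℝ} {T : ℝ → ℝ} {y : ℕ → ℝ}

theorem backwardOrbit_pos
    (hTdef : ∀ x : ℝ, T x = if x < 1/2 then x * (1 + 2 ^ α * x ^ α) else 2 * x - 1)
    (hy0 : y 0 = 1 / 2)
    (hy : ∀ n : ℕ, y (n + 1) ∈ Set.Icc (0 : ℝ) (y n) ∧ T (y (n + 1)) = y n) (n : ℕ) :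
    0 < y n := by
  induction n with
  | zero => norm_num [hy0]
  | succ n ih =>
    refine (hy n).1.1.lt_of_ne fun h => ih.ne ?_
    rw [← (hy n).2, ← h, hTdef]
    norm_num

theorem backwardOrbit_eq_mul_one_add
    (hTdef : ∀ x : ℝ, T x = if x < 1/2 then x * (1 + 2 ^ α * x ^ α) else 2 * x - 1)
    (hy0 : y 0 = 1 / 2)
    (hy : ∀ n : ℕ, y (n + 1) ∈ Set.Icc (0 : ℝ) (y n) ∧ T (y (n + 1)) = y n) (n : ℕ) :
    y n = y (n + 1) * (1 + 2 ^ α * y (n + 1) ^ α) := by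
  have hT := (hy n).2
  rw [hTdef] at hT
  split_ifs at hT
  · exact hT.symm
  -- on the right branch `T` would send `y (n + 1) ≤ 1 / 2` to a non-positive value
  have := (antitone_nat_of_succ_le fun n => (hy n).1.2) (Nat.zero_le (n + 1))
  linarith [backwardOrbit_pos hTdef hy0 hy n]

end BackwardOrbit

theorem stmt14_general (α : ℝ) (hα : 0 < α)
    (T : ℝ → ℝ)
    (hTdef : ∀ x : ℝ, T x = if x < 1/2 then x * (1 + 2 ^ α * x ^ α) else 2 * x - 1)
    (y : ℕ → ℝ) (hy0 : y 0 = 1/2)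
    (hy : ∀ n : ℕ, y (n + 1) ∈ Set.Icc (0:ℝ) (y n) ∧ T (y (n + 1)) = y n) :
    StrictAnti y ∧ Tendsto y atTop (nhds 0) ∧
    ∃ c : ℝ, 0 < c ∧
      Tendsto (fun n : ℕ => y n * (n : ℝ) ^ (1 / α)) atTop (nhds c) := by
  have hpos := backwardOrbit_pos hTdef hy0 hy
  have hrec := backwardOrbit_eq_mul_one_add hTdef hy0 hy
  have h2 : (0 : ℝ) < 2 ^ α := by positivity
  exact ⟨strictAnti_of_eq_mul_one_add h2 hpos hrec,
    tendsto_zero_of_eq_mul_one_add h2 hpos hrec, _, by positivity,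
    tendsto_mul_rpow_inv_of_eq_mul_one_add hα h2 hpos hrec⟩

theorem stmt14 (α : ℝ) (hα : 0 < α)
    (T : ℝ → ℝ)
    (hTdef : ∀ x : ℝ, T x = if x < 1/2 then x * (1 + 2 ^ α * x ^ α) else 2 * x - 1)
    (y : ℕ → ℝ) (hy0 : y 0 = 1/2)
    (hy : ∀ n : ℕ, y (n + 1) ∈ Set.Icc (0:ℝ) (y n) ∧ T (y (n + 1)) = y n)
    (huniq : ∀ n : ℕ, ∀ z ∈ Set.Icc (0:ℝ) (y n), T z = y n → z = y (n + 1)) :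
    StrictAnti y ∧ Tendsto y atTop (nhds 0) ∧
    ∃ c : ℝ, 0 < c ∧
      Tendsto (fun n : ℕ => y n * (n : ℝ) ^ (1 / α)) atTop (nhds c) :=
  stmt14_general α hα T hTdef y hy0 hy
end
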